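/- arXiv:2303.06385 — 4 statements merged into one kernel-verified Lean document; each statement's English description precedes it below -/
import Mathlib

section
/- Let p be an odd prime, m a positive integer, and α an integer with α ≡ 1 mod p^m. Then for all positive integers i and j, α^i·(α^{ij} - 1)/(α^i - 1) ≡ j + (α-1)·i·j·(j+1)/2 mod p^{2m}, where (α^{ij}-1)/(α^i-1) denotes the integer 1 + α^i + α^{2i} + ... + α^{(j-1)i}. -/
/-! Every power `α ^ n` is `1 + n (α - 1)` modulo `(α - 1) ^ 2`, hence modulo `p ^ (2 m)`.
Multiplying the geometric sum by `α ^ i` turns it into `∑_{t < j} α ^ ((t + 1) i)`, so it is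
congruent to `∑_{t < j} (1 + (t + 1) i (α - 1)) = j + (α - 1) i j (j + 1) / 2`. -/

open Finset

theorem sub_one_sq_dvd_pow_sub_one_sub_mul {R : Type*} [CommRing R] (a : R) (n : ℕ) :
    (a - 1) ^ 2 ∣ a ^ n - 1 - n * (a - 1) := by
  have h := sq_dvd_add_pow_sub_sub (a - 1) 1 n
  rwa [add_sub_cancel, one_pow, one_pow, one_mul, mul_comm, sub_right_comm] at h

theorem Int.pow_modEq_one_add_mul_of_dvd_sub_one {a q : ℤ} (h : q ∣ a - 1) (n : ℕ) :
    a ^ n ≡ 1 + n * (a - 1) [ZMOD q ^ 2] := by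
  refine (Int.modEq_iff_dvd.mpr ?_).symm
  rw [← sub_sub]
  exact (pow_dvd_pow_of_dvd h 2).trans (sub_one_sq_dvd_pow_sub_one_sub_mul a n)

theorem Finset.sum_range_add_one_eq_mul_succ_div_two (j : ℕ) :
    ∑ t ∈ range j, (t + 1) = j * (j + 1) / 2 := by
  rw [← add_zero (∑ t ∈ range j, (t + 1)), ← sum_range_succ' (fun t => t), sum_range_id,
    Nat.add_sub_cancel, mul_comm]

theorem geom_sum_congr_general (p m : ℕ) (α : ℤ)
    (hα : (p : ℤ) ^ m ∣ α - 1) (i j : ℕ) :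
    α ^ i * (∑ t ∈ Finset.range j, α ^ (t * i)) ≡
      (j : ℤ) + (α - 1) * (i : ℤ) * ((j * (j + 1) / 2 : ℕ) : ℤ) [ZMOD (p : ℤ) ^ (2 * m)] := by
  have hpow (n : ℕ) : α ^ n ≡ 1 + n * (α - 1) [ZMOD (p : ℤ) ^ (2 * m)] := by
    rw [mul_comm, pow_mul]
    exact Int.pow_modEq_one_add_mul_of_dvd_sub_one hα n
  have hshift : α ^ i * ∑ t ∈ range j, α ^ (t * i) = ∑ t ∈ range j, α ^ ((t + 1) * i) := by
    rw [mul_sum]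
    exact sum_congr rfl fun t _ => by rw [← pow_add, add_mul, one_mul, add_comm]
  rw [hshift, ← sum_range_add_one_eq_mul_succ_div_two]
  calc ∑ t ∈ range j, α ^ ((t + 1) * i)
      ≡ ∑ t ∈ range j, (1 + (((t + 1) * i : ℕ) : ℤ) * (α - 1)) [ZMOD (p : ℤ) ^ (2 * m)] :=
        Int.ModEq.sum fun t _ => hpow _
    _ = j + (α - 1) * i * ((∑ t ∈ range j, (t + 1) : ℕ) : ℤ) := by
        push_cast
        rw [sum_add_distrib, mul_sum, sum_const, card_range, nsmul_one]
        exact congrArg _ (sum_congr rfl fun t _ => by ring)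

theorem geom_sum_congr (p m : ℕ) (hp : p.Prime) (hodd : Odd p) (hm : 1 ≤ m) (α : ℤ)
    (hα : (p : ℤ) ^ m ∣ α - 1) (i j : ℕ) (hi : 1 ≤ i) (hj : 1 ≤ j) :
    α ^ i * (∑ t ∈ Finset.range j, α ^ (t * i)) ≡
      (j : ℤ) + (α - 1) * (i : ℤ) * ((j * (j + 1) / 2 : ℕ) : ℤ) [ZMOD (p : ℤ) ^ (2 * m)] :=
  geom_sum_congr_general p m α hα i j
end

section
/- Let T be a group whose center Z(T) is characteristic (which it always is), Y = T/Z(T), and Λ : Aut(T) → Aut(Y) the induced homomorphism. Writing Aut_i(T) for the kernel of the natural map Aut(T) → Aut(T/Z_i(T)), then for every i ≥ 0: Λ maps Aut_{i+2}(T) into Aut_{i+1}(Y), and the kernel of the induced map Aut_{i+2}(T) → Aut_{i+1}(Y)/Aut_i(Y) equals Aut_{i+1}(T). Consequently Aut_{i+2}(T)/Aut_{i+1}(T) embeds into Aut_{i+1}(Y)/Aut_i(Y). -/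
/-- `autC T i` is `Aut_i(T)`: automorphisms `g` with `g t * t⁻¹ ∈ Z_i(T)` for all `t`. -/
def autC (T : Type*) [Group T] (i : ℕ) : Subgroup (MulAut T) where
  carrier := {g | ∀ t : T, g t * t⁻¹ ∈ upperCentralSeries T i}
  one_mem' := by intro t; simpa using (upperCentralSeries T i).one_mem
  mul_mem' := by
    intro g h hg hh t
    have h1 := hg (h t)
    have h2 := hh t
    have : (g * h) t * t⁻¹ = (g (h t) * (h t)⁻¹) * (h t * t⁻¹) := by
      simp [MulAut.mul_apply, mul_assoc]
    rw [this]
    exact mul_mem h1 h2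
  inv_mem' := by
    intro g hg t
    have h1 := hg (g⁻¹ t)
    have h2 : g (g⁻¹ t) = t := by simp
    rw [h2] at h1
    have h3 := (upperCentralSeries T i).inv_mem h1
    simpa using h3

theorem autC_descend (T : Type*) [Group T]
    (Λ : MulAut T →* MulAut (T ⧸ Subgroup.center T))
    (hΛ : ∀ (g : MulAut T) (t : T),
      Λ g (QuotientGroup.mk t) = QuotientGroup.mk (g t)) (i : ℕ) :
    (∀ g ∈ autC T (i + 2), Λ g ∈ autC (T ⧸ Subgroup.center T) (i + 1)) ∧
    (∀ g ∈ autC T (i + 2),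
      (Λ g ∈ autC (T ⧸ Subgroup.center T) i ↔ g ∈ autC T (i + 1))) ∧
    (∀ g ∈ autC T (i + 2), ∀ h ∈ autC T (i + 2),
      ((Λ g)⁻¹ * Λ h ∈ autC (T ⧸ Subgroup.center T) i ↔ g⁻¹ * h ∈ autC T (i + 1))) := by
  have key : ∀ (j : ℕ) (g : MulAut T),
      Λ g ∈ autC (T ⧸ Subgroup.center T) j ↔ g ∈ autC T (j + 1) := by
    intro j g
    constructor
    · intro hg t
      have h1 := hg (QuotientGroup.mk t)
      rw [hΛ] at h1
      have h2 : (QuotientGroup.mk (g t) : T ⧸ Subgroup.center T) * (QuotientGroup.mk t)⁻¹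
          = QuotientGroup.mk (g t * t⁻¹) := by simp
      rw [h2] at h1
      have := comap_upperCentralSeries_quotient_center (G := T) j
      rw [← this] at *
      exact (SetLike.ext_iff.mp (comap_upperCentralSeries_quotient_center (G := T) j) (g t * t⁻¹)).mp h1
    · intro hg y
      induction y using QuotientGroup.induction_on with
      | H t =>
        have h1 := hg t
        replace h1 := (SetLike.ext_iff.mp (comap_upperCentralSeries_quotient_center (G := T) j) (g t * t⁻¹)).mpr h1
        have h2 : Λ g (QuotientGroup.mk t) * (QuotientGroup.mk t : T ⧸ Subgroup.center T)⁻¹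
            = QuotientGroup.mk (g t * t⁻¹) := by rw [hΛ]; simp
        rw [h2]
        exact h1
  refine ⟨fun g hg => ?_, fun g _ => key i g, fun g _ h _ => ?_⟩
  · exact (key (i + 1) g).mpr hg
  · have : (Λ g)⁻¹ * Λ h = Λ (g⁻¹ * h) := by rw [map_mul, map_inv]
    rw [this]
    exact key i (g⁻¹ * h)
end

section
/- Let p be an odd prime, m ≥ 1, and α an integer with v_p(α-1) = m, where additionally if p = 3 and m = 1 then (α-1)/3 ≡ 1 mod 3. Let K be the group with presentation ⟨a, b | a^{[a,b]} = a^α, b^{[b,a]} = b^α, a^{p^{2m}} = 1, b^{p^{2m}} = 1, [a,b]^{p^m} = 1⟩. Then if β is any integer with v_p(β-1) = m (and (β-1)/3 ≡ 1 mod 3 when p = 3, m = 1), the analogous group K(β) is isomorphic to K(α). -/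
/-- Relators of the Macdonald-type group `K(α)`:
`a^{[a,b]} = a^α`, `b^{[b,a]} = b^α`, `a^{p^{2m}} = 1`, `b^{p^{2m}} = 1`, `[a,b]^{p^m} = 1`,
with the convention `[a,b] = a⁻¹b⁻¹ab` and `x^y = y⁻¹xy`. -/
def kRels (p m : ℕ) (α : ℤ) : Set (FreeGroup (Fin 2)) :=
  let a : FreeGroup (Fin 2) := FreeGroup.of 0
  let b : FreeGroup (Fin 2) := FreeGroup.of 1
  let c : FreeGroup (Fin 2) := a⁻¹ * b⁻¹ * a * b
  {(c⁻¹ * a * c) * (a ^ α)⁻¹, (c * b * c⁻¹) * (b ^ α)⁻¹,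
    a ^ (p ^ (2 * m)), b ^ (p ^ (2 * m)), c ^ (p ^ m)}

/-- The group `K(α)` of order `p^{5m}`. -/
abbrev KGroup (p m : ℕ) (α : ℤ) := PresentedGroup (kRels p m α)

/-- `v_p(α - 1) = m`. -/
def vCond (p m : ℕ) (α : ℤ) : Prop :=
  (p : ℤ) ^ m ∣ α - 1 ∧ ¬ (p : ℤ) ^ (m + 1) ∣ α - 1

/-- The extra condition required when `p = 3` and `m = 1`. -/
def specialCond (p m : ℕ) (α : ℤ) : Prop :=
  p = 3 ∧ m = 1 → (α - 1) / 3 ≡ 1 [ZMOD 3]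

section GroupCalc
variable {G : Type*} [Group G]

private lemma conj_zpow_left (x y : G) (n : ℤ) : x⁻¹ * y ^ n * x = (x⁻¹ * y * x) ^ n := by
  have h : x⁻¹ * y * x = (MulAut.conj x⁻¹) y := by simp
  have h2 : x⁻¹ * y ^ n * x = (MulAut.conj x⁻¹) (y ^ n) := by simp
  rw [h, h2, map_zpow]

private lemma conj_zpow_right (x y : G) (n : ℤ) : x * y ^ n * x⁻¹ = (x * y * x⁻¹) ^ n := by
  have := conj_zpow_left x⁻¹ y n; simpa using this

private lemma zpow_eq_of_dvd_sub (g : G) (Q : ℕ) (hg : g ^ Q = 1) {x y : ℤ}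
    (h : (Q:ℤ) ∣ x - y) : g ^ x = g ^ y := by
  obtain ⟨k, hk⟩ := h
  have hx : x = y + (Q:ℤ) * k := by linarith
  have hgz : g ^ (Q:ℤ) = 1 := by rw [zpow_natCast, hg]
  rw [hx, zpow_add, zpow_mul, hgz, one_zpow, mul_one]

/-- Core computation: the images of the relators of `K(α)` under `a ↦ A`, `b ↦ B^ℓ`
hold in any group in which the relations of `K(β)` hold, provided `β^ℓ ≡ α mod p^{2m}`. -/
private lemma macdonald_key (N Q : ℕ) (hQN : Q = N * N) (β alp : ℤ) (A B : G)
    (h1 : (A⁻¹*B⁻¹*A*B)⁻¹ * A * (A⁻¹*B⁻¹*A*B) = A ^ β)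
    (h2 : (A⁻¹*B⁻¹*A*B) * B * (A⁻¹*B⁻¹*A*B)⁻¹ = B ^ β)
    (h3 : A ^ Q = 1) (h4 : B ^ Q = 1) (h5 : (A⁻¹*B⁻¹*A*B) ^ N = 1)
    (hd1 : (N:ℤ) ∣ β - 1)
    (hS : (Q:ℤ) ∣ (∑ k ∈ Finset.range N, β ^ (k+1)) - N)
    (ℓ : ℕ) (hℓ : (Q:ℤ) ∣ β ^ ℓ - alp) :
    (A⁻¹*(B^(ℓ:ℤ))⁻¹*A*(B^(ℓ:ℤ)))⁻¹ * A * (A⁻¹*(B^(ℓ:ℤ))⁻¹*A*(B^(ℓ:ℤ))) = A ^ alp ∧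
    (A⁻¹*(B^(ℓ:ℤ))⁻¹*A*(B^(ℓ:ℤ))) * (B^(ℓ:ℤ)) * (A⁻¹*(B^(ℓ:ℤ))⁻¹*A*(B^(ℓ:ℤ)))⁻¹
      = (B^(ℓ:ℤ)) ^ alp ∧
    (A⁻¹*(B^(ℓ:ℤ))⁻¹*A*(B^(ℓ:ℤ))) ^ N = 1 := by
  set C : G := A⁻¹*B⁻¹*A*B with hC
  set s : ℕ → ℤ := fun n => ∑ k ∈ Finset.range n, β ^ (k+1) with hs
  have conjA : ∀ x : ℤ, C⁻¹ * A ^ x * C = A ^ (x * β) := by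
    intro x
    rw [conj_zpow_left, h1, ← zpow_mul, mul_comm]
  have conjB : ∀ x : ℤ, C * B ^ x * C⁻¹ = B ^ (x * β) := by
    intro x
    rw [conj_zpow_right, h2, ← zpow_mul, mul_comm]
  have LA : ∀ (j : ℕ) (x : ℤ), A ^ x * C ^ j = C ^ j * A ^ (x * β ^ j) := by
    intro j
    induction j with
    | zero => intro x; simp
    | succ j ih =>
      intro x
      calc A ^ x * C ^ (j+1) = (A ^ x * C ^ j) * C := by rw [pow_succ, mul_assoc]
        _ = C ^ j * (C * (C⁻¹ * A ^ (x * β ^ j) * C)) := by rw [ih]; group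
        _ = C ^ j * (C * A ^ (x * β ^ j * β)) := by rw [conjA]
        _ = C ^ (j+1) * A ^ (x * β ^ (j+1)) := by rw [pow_succ, pow_succ]; group
  have LB : ∀ (j : ℕ) (x : ℤ), C ^ j * B ^ x = B ^ (x * β ^ j) * C ^ j := by
    intro j
    induction j with
    | zero => intro x; simp
    | succ j ih =>
      intro x
      calc C ^ (j+1) * B ^ x = C * (C ^ j * B ^ x) := by rw [pow_succ']; group
        _ = (C * B ^ (x * β ^ j) * C⁻¹) * (C * C ^ j) := by rw [ih]; group
        _ = B ^ (x * β ^ j * β) * C ^ (j+1) := by rw [conjB, pow_succ']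
        _ = B ^ (x * β ^ (j+1)) * C ^ (j+1) := by rw [pow_succ]; ring_nf
  have dv : ∀ k : ℕ, (N:ℤ) ∣ β ^ k - 1 := by
    intro k
    have h := sub_dvd_pow_sub_pow β 1 k
    rw [one_pow] at h
    exact dvd_trans hd1 h
  have hAB1 : A⁻¹ * B ^ (-1 : ℤ) * A = C * B ^ (-1:ℤ) := by
    rw [hC]; group
  have G1 : ∀ n : ℕ, A⁻¹ * B ^ (-(n:ℤ)) * A = B ^ (-(s n)) * C ^ n := by
    intro n
    induction n with
    | zero => simp [hs]
    | succ n ih =>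
      have key : A⁻¹ * B ^ (-((n:ℤ)+1)) * A
          = (A⁻¹ * B ^ (-(n:ℤ)) * A) * (A⁻¹ * B ^ (-1:ℤ) * A) := by group
      have e2 : C ^ (n+1) * B ^ (-1:ℤ) = B ^ ((-1) * β ^ (n+1)) * C ^ (n+1) := LB (n+1) (-1)
      calc A⁻¹ * B ^ (-((n+1:ℕ):ℤ)) * A
          = (A⁻¹ * B ^ (-(n:ℤ)) * A) * (A⁻¹ * B ^ (-1:ℤ) * A) := by push_cast; exact key
        _ = B ^ (-(s n)) * (C ^ (n+1) * B ^ (-1:ℤ)) := by rw [ih, hAB1, pow_succ]; group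
        _ = B ^ (-(s n)) * B ^ ((-1) * β ^ (n+1)) * C ^ (n+1) := by rw [e2]; group
        _ = B ^ (-(s (n+1))) * C ^ (n+1) := by
            have hsum : -(s n) + (-1) * β ^ (n+1) = -(s (n+1)) := by
              simp only [hs, Finset.sum_range_succ]; ring
            rw [← zpow_add, hsum]
  have commBN : Commute (B ^ ((N:ℤ))) A := by
    have e1 : A⁻¹ * B ^ (-(N:ℤ)) * A = B ^ (-(N:ℤ)) := by
      rw [G1 N, h5, mul_one]
      refine zpow_eq_of_dvd_sub B Q h4 ?_
      have : -(s N) - (-(N:ℤ)) = -((∑ k ∈ Finset.range N, β ^ (k+1)) - N) := by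
        simp only [hs]; ring
      rw [this]; exact dvd_neg.mpr hS
    have e2 : B ^ (-(N:ℤ)) * A = A * B ^ (-(N:ℤ)) := by
      have := congrArg (fun z => A * z) e1
      simpa [mul_assoc] using this
    have hcn : Commute (B ^ (-(N:ℤ))) A := e2
    simpa using hcn.inv_left
  have commT : ∀ t : ℤ, (N:ℤ) ∣ t → Commute (B ^ t) A := by
    intro t ⟨k, hk⟩
    rw [hk, zpow_mul]
    exact commBN.zpow_left k
  have commTC : ∀ t : ℤ, (N:ℤ) ∣ t → Commute (B ^ t) C := by
    intro t ht
    have hA := commT t ht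
    have hB : Commute (B ^ t) B := (Commute.refl B).zpow_left t
    rw [hC]
    exact ((hA.inv_right.mul_right hB.inv_right).mul_right hA).mul_right hB
  set t : ℤ := (ℓ:ℤ) * β ^ ℓ - s ℓ with hts
  have ht : (N:ℤ) ∣ t := by
    have e : t = ∑ k ∈ Finset.range ℓ, (β ^ ℓ - β ^ (k+1)) := by
      rw [Finset.sum_sub_distrib, Finset.sum_const, Finset.card_range, nsmul_eq_mul, hts, hs]
    rw [e]
    refine Finset.dvd_sum fun k _ => ?_
    have e2 : β ^ ℓ - β ^ (k+1) = (β ^ ℓ - 1) - (β ^ (k+1) - 1) := by ring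
    rw [e2]; exact dvd_sub (dv ℓ) (dv (k+1))
  have hBt := commT t ht
  have hBtC := commTC t ht
  have hC' : A⁻¹*(B^(ℓ:ℤ))⁻¹*A*(B^(ℓ:ℤ)) = B ^ t * C ^ ℓ := by
    have e1 : A⁻¹*(B^(ℓ:ℤ))⁻¹*A*(B^(ℓ:ℤ)) = (A⁻¹ * B ^ (-(ℓ:ℤ)) * A) * B ^ (ℓ:ℤ) := by
      simp only [zpow_neg]
    rw [e1, G1 ℓ, mul_assoc, LB ℓ (ℓ:ℤ), ← mul_assoc, ← zpow_add, hts]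
    ring_nf
  have hQdvd : ∀ x y : ℤ, (Q:ℤ) ∣ x - y → B ^ x = B ^ y := fun x y h =>
    zpow_eq_of_dvd_sub B Q h4 h
  refine ⟨?_, ?_, ?_⟩
  · rw [hC']
    have e1 : (B ^ t * C ^ ℓ)⁻¹ * A * (B ^ t * C ^ ℓ)
        = (C ^ ℓ)⁻¹ * (B ^ (-t) * A * B ^ t) * C ^ ℓ := by
      rw [zpow_neg]; group
    have e2 : B ^ (-t) * A * B ^ t = A := by
      rw [(commT (-t) (dvd_neg.mpr ht)).eq]; group
    have e3 : (C ^ ℓ)⁻¹ * A * C ^ ℓ = A ^ (β ^ ℓ) := by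
      have hLA := LA ℓ 1
      rw [zpow_one, one_mul] at hLA
      calc (C ^ ℓ)⁻¹ * A * C ^ ℓ = (C ^ ℓ)⁻¹ * (A * C ^ ℓ) := by group
        _ = (C ^ ℓ)⁻¹ * (C ^ ℓ * A ^ (β ^ ℓ)) := by rw [hLA]
        _ = A ^ (β ^ ℓ) := by group
    rw [e1, e2, e3]
    exact zpow_eq_of_dvd_sub A Q h3 hℓ
  · rw [hC']
    have e1 : (B ^ t * C ^ ℓ) * B ^ (ℓ:ℤ) * (B ^ t * C ^ ℓ)⁻¹
        = B ^ t * (C ^ ℓ * B ^ (ℓ:ℤ)) * (C ^ ℓ)⁻¹ * B ^ (-t) := by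
      rw [zpow_neg]; group
    rw [e1, LB ℓ (ℓ:ℤ)]
    have e2 : B ^ t * (B ^ ((ℓ:ℤ) * β ^ ℓ) * C ^ ℓ) * (C ^ ℓ)⁻¹ * B ^ (-t)
        = B ^ ((ℓ:ℤ) * β ^ ℓ) := by group
    rw [e2, ← zpow_mul]
    refine hQdvd _ _ ?_
    have e3 : (ℓ:ℤ) * β ^ ℓ - (ℓ:ℤ) * alp = (ℓ:ℤ) * (β ^ ℓ - alp) := by ring
    rw [e3]
    exact Dvd.dvd.mul_left hℓ _
  · rw [hC']
    have e1 : (B ^ t * C ^ ℓ) ^ N = (B ^ t) ^ N * (C ^ ℓ) ^ N :=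
      (hBtC.pow_right ℓ).mul_pow N
    have e2 : (C ^ ℓ) ^ N = 1 := by rw [← pow_mul, mul_comm, pow_mul, h5, one_pow]
    have e3 : (B ^ t) ^ N = 1 := by
      rw [← zpow_natCast (B ^ t) N, ← zpow_mul]
      have h0 : B ^ (0:ℤ) = 1 := zpow_zero B
      rw [← h0]
      refine hQdvd _ _ ?_
      obtain ⟨k, hk⟩ := ht
      rw [hk, sub_zero, hQN]
      exact ⟨k, by push_cast; ring⟩
    rw [e1, e2, e3, one_mul]
end GroupCalc

section NumTheory

private lemma binom_key (w γ : ℤ) (h : w ∣ γ - 1) :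
    ∀ k : ℕ, (w * w) ∣ γ ^ k - 1 - k * (γ - 1) := by
  intro k
  induction k with
  | zero => simp
  | succ k ih =>
    have e : γ ^ (k+1) - 1 - ((k:ℤ)+1) * (γ - 1)
        = γ * (γ ^ k - 1 - k * (γ - 1)) + (k:ℤ) * ((γ-1) * (γ-1)) := by ring
    push_cast
    rw [e]
    exact dvd_add (Dvd.dvd.mul_left ih γ) (Dvd.dvd.mul_left (mul_dvd_mul h h) _)

private lemma gauss_sum (n : ℕ) : 2 * (∑ k ∈ Finset.range n, ((k:ℤ) + 1)) = n * (n + 1) := by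
  induction n with
  | zero => simp
  | succ n ih =>
    rw [Finset.sum_range_succ, mul_add, ih]
    push_cast; ring

private lemma sum_key (N : ℕ) (hodd : Odd (N:ℤ)) (γ : ℤ) (h : (N:ℤ) ∣ γ - 1) :
    ((N:ℤ) * N) ∣ (∑ k ∈ Finset.range N, γ ^ (k+1)) - N := by
  have hT : (N:ℤ) ∣ (∑ k ∈ Finset.range N, ((k:ℤ) + 1)) := by
    obtain ⟨r, hr⟩ := hodd
    refine ⟨r+1, ?_⟩
    have h2 : 2 * (∑ k ∈ Finset.range N, ((k:ℤ)+1)) = 2 * ((N:ℤ) * (r+1)) := by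
      rw [gauss_sum, hr]; ring
    exact mul_left_cancel₀ two_ne_zero h2
  have e : (∑ k ∈ Finset.range N, γ ^ (k+1)) - N
      = (∑ k ∈ Finset.range N, (γ ^ (k+1) - 1 - ((k:ℤ)+1) * (γ - 1)))
        + (γ - 1) * (∑ k ∈ Finset.range N, ((k:ℤ)+1)) := by
    rw [Finset.mul_sum, ← Finset.sum_add_distrib]
    rw [show ((N:ℕ):ℤ) = ∑ _k ∈ Finset.range N, (1:ℤ) by simp]
    rw [← Finset.sum_sub_distrib]
    exact Finset.sum_congr rfl fun k _ => by ring
  rw [e]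
  refine dvd_add (Finset.dvd_sum fun k _ => ?_) (mul_dvd_mul h hT)
  have hb := binom_key (N:ℤ) γ h (k+1)
  push_cast at hb ⊢
  exact hb

/-- Existence of suitable exponents `ℓ`, `ℓ'`. -/
private lemma exists_ell (p m : ℕ) (hp : p.Prime) (hm : 1 ≤ m) (α β : ℤ)
    (hα1 : (p:ℤ) ^ m ∣ α - 1) (hα2 : ¬ (p:ℤ) ^ (m+1) ∣ α - 1)
    (hβ1 : (p:ℤ) ^ m ∣ β - 1) (hβ2 : ¬ (p:ℤ) ^ (m+1) ∣ β - 1) :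
    ∃ ℓ ℓ' : ℕ,
      ((p:ℤ)^m * (p:ℤ)^m) ∣ β ^ ℓ - α ∧
      ((p:ℤ)^m * (p:ℤ)^m) ∣ α ^ ℓ' - β ∧
      ((p:ℤ)^m * (p:ℤ)^m) ∣ (ℓ:ℤ) * (ℓ':ℤ) - 1 := by
  set PZ : ℤ := (p:ℤ)^m with hPZ
  have hpZ : Prime (p:ℤ) := by rw [Int.prime_iff_natAbs_prime]; simpa using hp
  have hp0 : (0:ℤ) < p := by exact_mod_cast hp.pos
  have hPZpos : 0 < PZ := by positivity
  obtain ⟨u, hu⟩ := hβ1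
  obtain ⟨v, hv⟩ := hα1
  have hpu : ¬ (p:ℤ) ∣ u := by
    rintro ⟨w, hw⟩
    exact hβ2 ⟨w, by rw [hu, hw, pow_succ]; ring⟩
  have hpv : ¬ (p:ℤ) ∣ v := by
    rintro ⟨w, hw⟩
    exact hα2 ⟨w, by rw [hv, hw, pow_succ]; ring⟩
  have hcop : IsCoprime PZ u := ((hpZ.coprime_iff_not_dvd).mpr hpu).pow_left
  obtain ⟨x, y, hxy⟩ := hcop
  set ℓ0 : ℤ := y * v with hℓ0
  set ℓ : ℕ := (ℓ0 % PZ).toNat with hℓdef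
  have hℓcast : (ℓ:ℤ) = ℓ0 % PZ :=
    Int.toNat_of_nonneg (Int.emod_nonneg ℓ0 (ne_of_gt hPZpos))
  have hmod : PZ ∣ (ℓ:ℤ) - ℓ0 := by
    refine ⟨-(ℓ0 / PZ), ?_⟩
    have := Int.mul_ediv_add_emod ℓ0 PZ
    rw [hℓcast]; linarith
  have hℓu : PZ ∣ (ℓ:ℤ) * u - v := by
    have e : (ℓ:ℤ) * u - v = ((ℓ:ℤ) - ℓ0) * u + (-(v * x)) * PZ := by
      rw [hℓ0]; linear_combination v * hxy
    rw [e]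
    exact dvd_add (hmod.mul_right u) (Dvd.intro_left _ rfl)
  have hℓβ : (PZ * PZ) ∣ β ^ ℓ - α := by
    have e : β ^ ℓ - α = (β ^ ℓ - 1 - (ℓ:ℤ) * (β - 1)) + PZ * ((ℓ:ℤ) * u - v) := by
      linear_combination (ℓ:ℤ) * hu - hv
    rw [e]
    exact dvd_add (binom_key PZ β ⟨u, hu⟩ ℓ) (mul_dvd_mul_left PZ hℓu)
  have hpl : ¬ (p:ℤ) ∣ (ℓ:ℤ) := by
    intro hdvd
    apply hpv
    have hpN : (p:ℤ) ∣ PZ := dvd_pow_self (p:ℤ) (by omega)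
    have h2 : (p:ℤ) ∣ (ℓ:ℤ) * u - v := hpN.trans hℓu
    have h3 : (p:ℤ) ∣ (ℓ:ℤ) * u := hdvd.mul_right u
    have e : v = (ℓ:ℤ) * u - ((ℓ:ℤ) * u - v) := by ring
    rw [e]
    exact dvd_sub h3 h2
  have hcop2 : IsCoprime ((ℓ:ℤ)) (PZ * PZ) := by
    have hcp : IsCoprime ((ℓ:ℤ)) ((p:ℤ)) := ((hpZ.coprime_iff_not_dvd).mpr hpl).symm
    exact (hcp.pow_right).mul_right (hcp.pow_right)
  obtain ⟨x2, y2, hxy2⟩ := hcop2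
  have hQpos : 0 < PZ * PZ := by positivity
  set ℓ' : ℕ := (x2 % (PZ * PZ)).toNat with hℓ'def
  have hℓ'cast : (ℓ':ℤ) = x2 % (PZ * PZ) :=
    Int.toNat_of_nonneg (Int.emod_nonneg x2 (ne_of_gt hQpos))
  have hmod2 : (PZ * PZ) ∣ (ℓ':ℤ) - x2 := by
    refine ⟨-(x2 / (PZ * PZ)), ?_⟩
    have := Int.mul_ediv_add_emod x2 (PZ * PZ)
    rw [hℓ'cast]; linarith
  have hinv : (PZ * PZ) ∣ (ℓ:ℤ) * (ℓ':ℤ) - 1 := by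
    have e : (ℓ:ℤ) * (ℓ':ℤ) - 1 = (ℓ:ℤ) * ((ℓ':ℤ) - x2) + (-y2) * (PZ * PZ) := by
      linear_combination hxy2
    rw [e]
    exact dvd_add (hmod2.mul_left _) (Dvd.intro_left _ rfl)
  refine ⟨ℓ, ℓ', hℓβ, ?_, hinv⟩
  have part1 : (PZ * PZ) ∣ α ^ ℓ' - β ^ (ℓ * ℓ') := by
    have hdd : (α - β ^ ℓ) ∣ α ^ ℓ' - (β ^ ℓ) ^ ℓ' := sub_dvd_pow_sub_pow α (β ^ ℓ) ℓ'
    have h2 : (PZ * PZ) ∣ α - β ^ ℓ := by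
      have e2 : α - β ^ ℓ = -(β ^ ℓ - α) := by ring
      rw [e2]; exact hℓβ.neg_right
    rw [pow_mul]
    exact h2.trans hdd
  have part2 : (PZ * PZ) ∣ β ^ (ℓ * ℓ') - β := by
    have hk : (PZ * PZ) ∣ ((ℓ * ℓ' : ℕ) : ℤ) - 1 := by push_cast; exact hinv
    have e : β ^ (ℓ * ℓ') - β
        = (β ^ (ℓ * ℓ') - 1 - ((ℓ * ℓ' : ℕ):ℤ) * (β - 1))
          + (((ℓ * ℓ' : ℕ):ℤ) - 1) * (β - 1) := by ring
    rw [e]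
    exact dvd_add (binom_key PZ β ⟨u, hu⟩ _) (hk.mul_right _)
  have e : α ^ ℓ' - β = (α ^ ℓ' - β ^ (ℓ * ℓ')) + (β ^ (ℓ * ℓ') - β) := by ring
  rw [e]
  exact dvd_add part1 part2
end NumTheory

section Assembly

private lemma krel_holds (p m : ℕ) (β : ℤ) :
    ∀ r ∈ kRels p m β, PresentedGroup.mk (kRels p m β) r = 1 := fun r hr =>
  (QuotientGroup.eq_one_iff r).mpr (Subgroup.subset_normalClosure hr)

/-- Construction of the homomorphism `K(α) →* K(β)`, `a ↦ a`, `b ↦ b^ℓ`. -/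
private lemma buildHom (p m : ℕ) (hodd : Odd p) (β alp : ℤ)
    (hd1 : ((p:ℤ))^m ∣ β - 1)
    (ℓ : ℕ) (hℓ : ((p:ℤ)^m * (p:ℤ)^m) ∣ β ^ ℓ - alp) :
    ∃ φ : KGroup p m alp →* KGroup p m β,
      φ (PresentedGroup.of 0) = PresentedGroup.of 0 ∧
      φ (PresentedGroup.of 1) = (PresentedGroup.of 1 : KGroup p m β) ^ (ℓ:ℤ) := by
  have hQN : p ^ (2*m) = p ^ m * p ^ m := by rw [two_mul, pow_add]
  set N : ℕ := p ^ m with hN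
  set Q : ℕ := p ^ (2*m) with hQ
  have hNcast : ((N:ℕ):ℤ) = (p:ℤ)^m := by push_cast [hN]; ring
  have hQcast : ((Q:ℕ):ℤ) = (p:ℤ)^m * (p:ℤ)^m := by
    rw [hQ, two_mul, pow_add]; push_cast; ring
  set fa : FreeGroup (Fin 2) := FreeGroup.of 0 with hfa
  set fb : FreeGroup (Fin 2) := FreeGroup.of 1 with hfb
  set fc : FreeGroup (Fin 2) := fa⁻¹ * fb⁻¹ * fa * fb with hfc
  have mem1 : (fc⁻¹ * fa * fc) * (fa ^ β)⁻¹ ∈ kRels p m β := Set.mem_insert _ _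
  have mem2 : (fc * fb * fc⁻¹) * (fb ^ β)⁻¹ ∈ kRels p m β :=
    Set.mem_insert_of_mem _ (Set.mem_insert _ _)
  have mem3 : fa ^ (p ^ (2*m)) ∈ kRels p m β :=
    Set.mem_insert_of_mem _ (Set.mem_insert_of_mem _ (Set.mem_insert _ _))
  have mem4 : fb ^ (p ^ (2*m)) ∈ kRels p m β :=
    Set.mem_insert_of_mem _ (Set.mem_insert_of_mem _ (Set.mem_insert_of_mem _
      (Set.mem_insert _ _)))
  have mem5 : fc ^ (p ^ m) ∈ kRels p m β :=
    Set.mem_insert_of_mem _ (Set.mem_insert_of_mem _ (Set.mem_insert_of_mem _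
      (Set.mem_insert_of_mem _ rfl)))
  set A : KGroup p m β := PresentedGroup.mk (kRels p m β) fa with hA
  set B : KGroup p m β := PresentedGroup.mk (kRels p m β) fb with hB
  have h1 := krel_holds p m β _ mem1
  have h2 := krel_holds p m β _ mem2
  have h3 := krel_holds p m β _ mem3
  have h4 := krel_holds p m β _ mem4
  have h5 := krel_holds p m β _ mem5
  simp only [map_mul, map_inv, map_zpow, map_pow, hfc] at h1 h2 h3 h4 h5
  rw [mul_inv_eq_one] at h1 h2
  simp only [← hA, ← hB] at h1 h2 h3 h4 h5
  -- the sum condition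
  have hoddN : Odd ((N:ℕ):ℤ) := by
    rw [hNcast]
    have : Odd ((p:ℤ)) := by exact_mod_cast hodd
    exact this.pow
  have hd1' : ((N:ℕ):ℤ) ∣ β - 1 := by rw [hNcast]; exact hd1
  have hS : ((Q:ℕ):ℤ) ∣ (∑ k ∈ Finset.range N, β ^ (k+1)) - N := by
    rw [hQcast, ← hNcast]
    exact sum_key N hoddN β hd1'
  have hℓ' : ((Q:ℕ):ℤ) ∣ β ^ ℓ - alp := by rw [hQcast]; exact hℓ
  have key := macdonald_key N Q hQN β alp A B h1 h2 h3 h4 h5 hd1' hS ℓ hℓ'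
  -- build the lift
  set f : Fin 2 → KGroup p m β := ![A, B ^ (ℓ:ℤ)] with hf
  have hlift : ∀ r ∈ kRels p m alp, FreeGroup.lift f r = 1 := by
    intro r hr
    simp only [kRels, Set.mem_insert_iff, Set.mem_singleton_iff] at hr
    rcases hr with rfl | rfl | rfl | rfl | rfl
    · simp only [map_mul, map_inv, map_zpow, FreeGroup.lift_apply_of, hf,
        Matrix.cons_val_zero, Matrix.cons_val_one, Matrix.head_cons]
      rw [mul_inv_eq_one]
      exact key.1
    · simp only [map_mul, map_inv, map_zpow, FreeGroup.lift_apply_of, hf,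
        Matrix.cons_val_zero, Matrix.cons_val_one, Matrix.head_cons]
      rw [mul_inv_eq_one]
      exact key.2.1
    · simp only [map_pow, FreeGroup.lift_apply_of, hf, Matrix.cons_val_zero]
      exact h3
    · simp only [map_pow, FreeGroup.lift_apply_of, hf, Matrix.cons_val_one, Matrix.head_cons,
        Matrix.cons_val_zero]
      have e : (B ^ (ℓ:ℤ)) ^ (p ^ (2*m)) = (B ^ (p ^ (2*m))) ^ (ℓ:ℤ) := by
        rw [← zpow_natCast (B ^ (ℓ:ℤ)) (p ^ (2*m)), ← zpow_natCast B (p ^ (2*m)),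
          ← zpow_mul, ← zpow_mul, mul_comm (ℓ:ℤ) ((p ^ (2*m) : ℕ):ℤ)]
      rw [e, h4, one_zpow]
    · simp only [map_mul, map_inv, map_pow, FreeGroup.lift_apply_of, hf,
        Matrix.cons_val_zero, Matrix.cons_val_one, Matrix.head_cons]
      exact key.2.2
  refine ⟨PresentedGroup.toGroup hlift, ?_, ?_⟩
  · rw [PresentedGroup.toGroup.of]; rfl
  · rw [PresentedGroup.toGroup.of]; rfl

end Assembly

theorem KGroup_iso (p m : ℕ) (hp : p.Prime) (hodd : Odd p) (hm : 1 ≤ m) (α β : ℤ)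
    (hα : vCond p m α) (hα' : specialCond p m α)
    (hβ : vCond p m β) (hβ' : specialCond p m β) :
    Nonempty (KGroup p m α ≃* KGroup p m β) := by
  obtain ⟨ℓ, ℓ', hℓβ, hℓ'α, hinv⟩ :=
    exists_ell p m hp hm α β hα.1 hα.2 hβ.1 hβ.2
  obtain ⟨φ, hφ0, hφ1⟩ := buildHom p m hodd β α hβ.1 ℓ hℓβ
  obtain ⟨ψ, hψ0, hψ1⟩ := buildHom p m hodd α β hα.1 ℓ' hℓ'α
  -- b ^ Q = 1 in both groups
  have hbQ : ∀ (γ : ℤ), (PresentedGroup.of 1 : KGroup p m γ) ^ (p ^ (2*m)) = 1 := by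
    intro γ
    have mem4 : (FreeGroup.of 1 : FreeGroup (Fin 2)) ^ (p ^ (2*m)) ∈ kRels p m γ :=
      Set.mem_insert_of_mem _ (Set.mem_insert_of_mem _ (Set.mem_insert_of_mem _
        (Set.mem_insert _ _)))
    have h := krel_holds p m γ _ mem4
    rw [map_pow] at h
    exact h
  have hQcast : ((p ^ (2*m) : ℕ):ℤ) = (p:ℤ)^m * (p:ℤ)^m := by
    rw [two_mul, pow_add]; push_cast; ring
  have hcomp1 : ψ.comp φ = MonoidHom.id (KGroup p m α) := by
    apply PresentedGroup.ext
    intro i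
    fin_cases i <;>
      simp only [Fin.zero_eta, Fin.mk_one, Fin.isValue, MonoidHom.comp_apply,
        MonoidHom.id_apply]
    · rw [hφ0, hψ0]
    · rw [hφ1, map_zpow, hψ1, ← zpow_mul]
      have : (PresentedGroup.of 1 : KGroup p m α) ^ ((ℓ':ℤ) * (ℓ:ℤ))
          = (PresentedGroup.of 1 : KGroup p m α) ^ (1:ℤ) := by
        refine zpow_eq_of_dvd_sub _ (p ^ (2*m)) (hbQ α) ?_
        rw [hQcast]
        have e : (ℓ':ℤ) * (ℓ:ℤ) - 1 = (ℓ:ℤ) * (ℓ':ℤ) - 1 := by ring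
        rw [e]; exact hinv
      rw [this, zpow_one]
  have hcomp2 : φ.comp ψ = MonoidHom.id (KGroup p m β) := by
    apply PresentedGroup.ext
    intro i
    fin_cases i <;>
      simp only [Fin.zero_eta, Fin.mk_one, Fin.isValue, MonoidHom.comp_apply,
        MonoidHom.id_apply]
    · rw [hψ0, hφ0]
    · rw [hψ1, map_zpow, hφ1, ← zpow_mul]
      have : (PresentedGroup.of 1 : KGroup p m β) ^ ((ℓ:ℤ) * (ℓ':ℤ))
          = (PresentedGroup.of 1 : KGroup p m β) ^ (1:ℤ) := by
        refine zpow_eq_of_dvd_sub _ (p ^ (2*m)) (hbQ β) ?_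
        rw [hQcast]; exact hinv
      rw [this, zpow_one]
  exact ⟨MonoidHom.toMulEquiv φ ψ hcomp1 hcomp2⟩
end

section
/- Let p be an odd prime, m ≥ 1. In the group K = ⟨a,b | a^{[a,b]}=a^α, b^{[b,a]}=b^α, a^{p^{2m}}=b^{p^{2m}}=[a,b]^{p^m}=1⟩ with v_p(α-1) = m, for any integers r, s with rs ≡ 1 mod p^{2m}, the assignment a ↦ a^r, b ↦ b^s extends to an automorphism f_r of K, and the map r mod p^{2m} ↦ f_r is an injective group homomorphism from (ℤ/p^{2m}ℤ)^× to Aut(K). -/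
set_option linter.unusedSectionVars false
set_option maxHeartbeats 1000000

namespace KGroupAux

/-! ### Integer congruence lemmas -/

lemma one_add_pow_modEq (x : ℤ) : ∀ k : ℕ, (1 + x) ^ k ≡ 1 + k * x [ZMOD x ^ 2]
  | 0 => by simp
  | (k + 1) => by
    have ih := one_add_pow_modEq x k
    have h1 : (1 + x) ^ (k + 1) = (1 + x) ^ k * (1 + x) := by ring
    rw [h1]
    calc (1 + x) ^ k * (1 + x) ≡ (1 + k * x) * (1 + x) [ZMOD x ^ 2] := ih.mul_right _
      _ ≡ 1 + (k + 1 : ℕ) * x [ZMOD x ^ 2] :=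
          Int.ModEq.symm (Int.modEq_iff_dvd.mpr ⟨k, by push_cast; ring⟩)

/-! ### The concrete model group -/

variable (p m : ℕ)

lemma pm_dvd : p ^ m ∣ p ^ (2 * m) := pow_dvd_pow p (by omega)

/-- projection `ZMod p^{2m} → ZMod p^m` -/
def qπ : ZMod (p ^ (2 * m)) →+* ZMod (p ^ m) := ZMod.castHom (pm_dvd p m) _

lemma pm_mul_pm : ((p : ZMod (p ^ (2 * m))) ^ m) * ((p : ZMod (p ^ (2 * m))) ^ m) = 0 := by
  rw [← pow_add]
  have : ((p : ZMod (p ^ (2 * m))) ^ (m + m)) = ((p ^ (2 * m) : ℕ) : ZMod (p ^ (2 * m))) := by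
    push_cast; rw [two_mul]
  rw [this, ZMod.natCast_self]

lemma qraw_congr {A B : ℤ} (h : ((p : ℤ) ^ m) ∣ A - B) :
    (p : ZMod (p ^ (2 * m))) ^ m * (A : ZMod (p ^ (2 * m))) =
    (p : ZMod (p ^ (2 * m))) ^ m * (B : ZMod (p ^ (2 * m))) := by
  obtain ⟨k, hk⟩ := h
  have hA : A = B + (p : ℤ) ^ m * k := by linarith
  have : (A : ZMod (p ^ (2 * m))) = (B : ZMod (p ^ (2 * m))) +
      (p : ZMod (p ^ (2 * m))) ^ m * (k : ZMod (p ^ (2 * m))) := by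
    rw [hA]; push_cast; ring
  rw [this, mul_add, ← mul_assoc, pm_mul_pm, zero_mul, add_zero]

/-- scaled embedding `ZMod p^m → ZMod p^{2m}`, `t ↦ p^m t`. -/
def qι (t : ZMod (p ^ m)) : ZMod (p ^ (2 * m)) :=
  (p : ZMod (p ^ (2 * m))) ^ m * ((t.val : ℤ) : ZMod (p ^ (2 * m)))

variable [NeZero (p ^ m)]
set_option linter.unusedSectionVars false

lemma qι_intCast (n : ℤ) : qι p m ((n : ZMod (p ^ m))) =
    (p : ZMod (p ^ (2 * m))) ^ m * (n : ZMod (p ^ (2 * m))) := by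
  unfold qι
  apply qraw_congr
  rw [ZMod.val_intCast]
  exact ⟨-(n / (p ^ m)), by push_cast; rw [Int.emod_def]; ring⟩

lemma qι_zero : qι p m 0 = 0 := by
  simp [qι, ZMod.val_zero]

lemma qι_add (s t : ZMod (p ^ m)) : qι p m (s + t) = qι p m s + qι p m t := by
  unfold qι
  have h : (p : ZMod (p ^ (2 * m))) ^ m * (((s.val + t.val : ℕ) : ℤ) : ZMod (p ^ (2 * m))) =
      (p : ZMod (p ^ (2 * m))) ^ m * ((s.val : ℤ) : ZMod (p ^ (2 * m))) +
      (p : ZMod (p ^ (2 * m))) ^ m * ((t.val : ℤ) : ZMod (p ^ (2 * m))) := by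
    push_cast; ring
  rw [← h]
  apply qraw_congr
  rw [ZMod.val_add]
  refine ⟨-(((s.val + t.val : ℕ) : ℤ) / (p ^ m)), ?_⟩
  push_cast
  rw [Int.emod_def]
  ring

/-- `qι` as an additive monoid hom. -/
def qιA : ZMod (p ^ m) →+ ZMod (p ^ (2 * m)) :=
  { toFun := qι p m, map_zero' := qι_zero p m, map_add' := qι_add p m }

@[simp] lemma qιA_apply (t : ZMod (p ^ m)) : qιA p m t = qι p m t := rfl

@[simp] lemma qπ_qι (t : ZMod (p ^ m)) : qπ p m (qι p m t) = 0 := by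
  unfold qι
  rw [map_mul, map_pow, map_natCast]
  have : ((p : ZMod (p ^ m)) ^ m) = ((p ^ m : ℕ) : ZMod (p ^ m)) := by push_cast; rfl
  rw [this, ZMod.natCast_self, zero_mul]


section QGsec

/-- The model group `K/⟨b^{p^m}⟩`, as triples `a^x c^y b^z`. -/
@[ext] structure QG (p m : ℕ) (w iv : ZMod (p ^ m)) : Type where
  x : ZMod (p ^ (2 * m))
  y : ZMod (p ^ m)
  z : ZMod (p ^ m)

namespace QG

variable {p m : ℕ} {w iv : ZMod (p ^ m)} [NeZero (p ^ m)]
set_option linter.unusedSectionVars false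

/-- auxiliary "triangular number" term -/
def T (iv v : ZMod (p ^ m)) : ZMod (p ^ m) := v * (v - 1) * iv

lemma T_add (h2 : iv + iv = 1) (A B : ZMod (p ^ m)) :
    T iv (A + B) = T iv A + T iv B + A * B := by
  unfold T; linear_combination (A * B) * h2

lemma T_neg_add (h2 : iv + iv = 1) (A : ZMod (p ^ m)) :
    T iv A + T iv (-A) = A * A := by
  unfold T; linear_combination (A * A) * h2

@[simp] lemma T_zero : T iv (0 : ZMod (p ^ m)) = 0 := by simp [T]
@[simp] lemma T_one : T iv (1 : ZMod (p ^ m)) = 0 := by simp [T]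

instance : Mul (QG p m w iv) :=
  ⟨fun g h =>
    ⟨g.x + h.x + qιA p m (w * (g.z * T iv (qπ p m h.x) - g.y * qπ p m h.x)),
     g.y + h.y - g.z * qπ p m h.x, g.z + h.z⟩⟩

instance : One (QG p m w iv) := ⟨⟨0, 0, 0⟩⟩

instance : Inv (QG p m w iv) :=
  ⟨fun g => ⟨-g.x - qιA p m (w * (g.y * qπ p m g.x + g.z * T iv (-qπ p m g.x))),
    -g.y - g.z * qπ p m g.x, -g.z⟩⟩

@[simp] lemma mul_x (g h : QG p m w iv) : (g * h).x =
    g.x + h.x + qιA p m (w * (g.z * T iv (qπ p m h.x) - g.y * qπ p m h.x)) := rfl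
@[simp] lemma mul_y (g h : QG p m w iv) : (g * h).y = g.y + h.y - g.z * qπ p m h.x := rfl
@[simp] lemma mul_z (g h : QG p m w iv) : (g * h).z = g.z + h.z := rfl
@[simp] lemma one_x : (1 : QG p m w iv).x = 0 := rfl
@[simp] lemma one_y : (1 : QG p m w iv).y = 0 := rfl
@[simp] lemma one_z : (1 : QG p m w iv).z = 0 := rfl
@[simp] lemma inv_x (g : QG p m w iv) : (g⁻¹).x =
    -g.x - qιA p m (w * (g.y * qπ p m g.x + g.z * T iv (-qπ p m g.x))) := rfl
@[simp] lemma inv_y (g : QG p m w iv) : (g⁻¹).y = -g.y - g.z * qπ p m g.x := rfl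
@[simp] lemma inv_z (g : QG p m w iv) : (g⁻¹).z = -g.z := rfl

variable (h2 : iv + iv = 1)

lemma mul_assoc' [Fact (iv + iv = 1)] (g₁ g₂ g₃ : QG p m w iv) :
    g₁ * g₂ * g₃ = g₁ * (g₂ * g₃) := by
  have h2 : iv + iv = 1 := Fact.out
  ext
  · simp only [mul_x, mul_y, mul_z, map_add, qιA_apply, qπ_qι, add_zero]
    rw [T_add h2 (qπ p m g₂.x) (qπ p m g₃.x)]
    have key : (w * (g₁.z * T iv (qπ p m g₂.x) - g₁.y * qπ p m g₂.x)) +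
        (w * ((g₁.z + g₂.z) * T iv (qπ p m g₃.x) -
          (g₁.y + g₂.y - g₁.z * qπ p m g₂.x) * qπ p m g₃.x)) =
        (w * (g₂.z * T iv (qπ p m g₃.x) - g₂.y * qπ p m g₃.x)) +
        (w * (g₁.z * (T iv (qπ p m g₂.x) + T iv (qπ p m g₃.x) + qπ p m g₂.x * qπ p m g₃.x) -
          g₁.y * (qπ p m g₂.x + qπ p m g₃.x))) := by ring
    have key2 := congrArg (qι p m) key
    rw [qι_add, qι_add] at key2
    linear_combination key2
  · simp only [mul_x, mul_y, mul_z, map_add, qιA_apply, qπ_qι, add_zero]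
    ring
  · simp only [mul_z]; ring

lemma one_mul' (g : QG p m w iv) : 1 * g = g := by
  ext <;> simp [qι_zero]

lemma inv_mul' [Fact (iv + iv = 1)] (g : QG p m w iv) : g⁻¹ * g = 1 := by
  have h2 : iv + iv = 1 := Fact.out
  ext
  · simp only [mul_x, inv_x, inv_y, inv_z, one_x, qιA_apply]
    have h3 : T iv (qπ p m g.x) + T iv (-qπ p m g.x) - qπ p m g.x * qπ p m g.x = 0 := by
      rw [← T_neg_add h2 (qπ p m g.x)]; ring
    have key : -(w * (g.y * qπ p m g.x + g.z * T iv (-qπ p m g.x))) +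
        (w * ((-g.z) * T iv (qπ p m g.x) - (-g.y - g.z * qπ p m g.x) * qπ p m g.x)) = 0 := by
      linear_combination (w * (-g.z)) * h3
    have key2 := congrArg (qιA p m) key
    rw [map_add, map_neg, map_zero, qιA_apply, qιA_apply] at key2
    linear_combination key2
  · simp only [mul_y, inv_y, inv_z, one_y]; ring
  · simp only [mul_z, inv_z, one_z]; ring

instance instGroup [Fact (iv + iv = 1)] : Group (QG p m w iv) :=
  Group.ofLeftAxioms mul_assoc' one_mul' inv_mul'

/-- image of `a` -/
@[simps] def A : QG p m w iv := ⟨1, 0, 0⟩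
/-- image of `b` -/
@[simps] def B : QG p m w iv := ⟨0, 0, 1⟩
/-- image of `c` -/
@[simps] def C : QG p m w iv := ⟨0, 1, 0⟩

variable [Fact (iv + iv = 1)]

lemma A_zpow (n : ℤ) : (A : QG p m w iv) ^ n = ⟨(n : ZMod (p ^ (2 * m))), 0, 0⟩ := by
  induction n using Int.induction_on with
  | zero => ext <;> simp
  | succ k ih =>
      rw [zpow_add_one, ih]
      ext <;> simp [qι_zero] <;> push_cast <;> ring
  | pred k ih =>
      rw [zpow_sub_one, ih]
      ext <;> simp [qι_zero] <;> push_cast <;> ring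

lemma B_zpow (n : ℤ) : (B : QG p m w iv) ^ n = ⟨0, 0, (n : ZMod (p ^ m))⟩ := by
  induction n using Int.induction_on with
  | zero => ext <;> simp
  | succ k ih =>
      rw [zpow_add_one, ih]
      ext <;> simp [qι_zero] <;> push_cast <;> ring
  | pred k ih =>
      rw [zpow_sub_one, ih]
      ext <;> simp [qι_zero] <;> push_cast <;> ring

lemma C_zpow (n : ℤ) : (C : QG p m w iv) ^ n = ⟨0, (n : ZMod (p ^ m)), 0⟩ := by
  induction n using Int.induction_on with
  | zero => ext <;> simp
  | succ k ih =>
      rw [zpow_add_one, ih]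
      ext <;> simp [qι_zero] <;> push_cast <;> ring
  | pred k ih =>
      rw [zpow_sub_one, ih]
      ext <;> simp [qι_zero] <;> push_cast <;> ring

lemma A_pow (n : ℕ) : (A : QG p m w iv) ^ n = ⟨(n : ZMod (p ^ (2 * m))), 0, 0⟩ := by
  rw [← zpow_natCast, A_zpow]; push_cast; rfl

lemma B_pow (n : ℕ) : (B : QG p m w iv) ^ n = ⟨0, 0, (n : ZMod (p ^ m))⟩ := by
  rw [← zpow_natCast, B_zpow]; push_cast; rfl

lemma C_pow (n : ℕ) : (C : QG p m w iv) ^ n = ⟨0, (n : ZMod (p ^ m)), 0⟩ := by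
  rw [← zpow_natCast, C_zpow]; push_cast; rfl

lemma comm_AB : ((A : QG p m w iv)⁻¹ * B⁻¹ * A * B) = C := by
  have h1 : ((A : QG p m w iv)⁻¹ * B⁻¹ * A * B) =
      ((A⁻¹ * B⁻¹) * A) * B := by group
  rw [h1]
  have hA : (A : QG p m w iv)⁻¹ = ⟨-1, 0, 0⟩ := by ext <;> simp [qι_zero]
  have hB : (B : QG p m w iv)⁻¹ = ⟨0, 0, -1⟩ := by ext <;> simp [qι_zero]
  rw [hA, hB]
  ext <;> simp [qι_zero]

section rels
variable (α u₀ : ℤ) (hw : w = ((u₀ : ℤ) : ZMod (p ^ m))) (hα : α = 1 + (p : ℤ) ^ m * u₀)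

include hw hα in
lemma rel1 : ((C : QG p m w iv)⁻¹ * A * C) * (A ^ α)⁻¹ = 1 := by
  have hC : (C : QG p m w iv)⁻¹ = ⟨0, -1, 0⟩ := by ext <;> simp [qι_zero]
  have hCA : ((C : QG p m w iv)⁻¹ * A) = ⟨1 + qι p m w, -1, 0⟩ := by
    rw [hC]; ext <;> simp
  have hCAC : ((C : QG p m w iv)⁻¹ * A * C) = ⟨1 + qι p m w, 0, 0⟩ := by
    rw [hCA]; ext <;> simp [qι_zero]
  have hAα : ((A : QG p m w iv) ^ α) = ⟨1 + qι p m w, 0, 0⟩ := by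
    rw [A_zpow, hα, hw, qι_intCast]
    ext <;> push_cast <;> simp
  rw [hCAC, hAα, mul_inv_cancel]

include hα in
lemma rel2 : ((C : QG p m w iv) * B * C⁻¹) * (B ^ α)⁻¹ = 1 := by
  have hC : (C : QG p m w iv)⁻¹ = ⟨0, -1, 0⟩ := by ext <;> simp [qι_zero]
  have hCB : ((C : QG p m w iv) * B) = ⟨0, 1, 1⟩ := by ext <;> simp [qι_zero]
  have hCBC : ((C : QG p m w iv) * B * C⁻¹) = ⟨0, 0, 1⟩ := by
    rw [hCB, hC]; ext <;> simp [qι_zero]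
  have hBα : ((B : QG p m w iv) ^ α) = ⟨0, 0, 1⟩ := by
    rw [B_zpow, hα]
    have : ((1 + (p : ℤ) ^ m * u₀ : ℤ) : ZMod (p ^ m)) = 1 := by
      push_cast
      have hz : ((p : ZMod (p ^ m)) ^ m) = ((p ^ m : ℕ) : ZMod (p ^ m)) := by push_cast; rfl
      rw [hz, ZMod.natCast_self, zero_mul, add_zero]
    rw [this]
  rw [hCBC, hBα]
  have : ((B : QG p m w iv)) = ⟨0, 0, 1⟩ := rfl
  rw [← this, mul_inv_cancel]

lemma rel3 : (A : QG p m w iv) ^ (p ^ (2 * m)) = 1 := by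
  rw [A_pow, ZMod.natCast_self]; rfl

lemma rel4 : (B : QG p m w iv) ^ (p ^ (2 * m)) = 1 := by
  rw [B_pow]
  have : ((p ^ (2 * m) : ℕ) : ZMod (p ^ m)) = 0 := by
    rw [ZMod.natCast_eq_zero_iff]
    exact pm_dvd p m
  rw [this]; rfl

lemma rel5 : (C : QG p m w iv) ^ (p ^ m) = 1 := by
  rw [C_pow, ZMod.natCast_self]; rfl

end rels

end QG
end QGsec
end KGroupAux

namespace KGroupAux

/-- `Sfun α n = α + α² + ⋯ + αⁿ` -/
def Sfun (α : ℤ) : ℕ → ℤ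
  | 0 => 0
  | n + 1 => α * (Sfun α n + 1)

/-- `efun j = 0 + 1 + ⋯ + (j-1)` -/
def efun : ℕ → ℤ
  | 0 => 0
  | j + 1 => efun j + j

/-- recursion for `(a c^s)^r` exponents -/
def gfun (α : ℤ) (s : ℕ) : ℕ → ℤ
  | 0 => 0
  | r + 1 => α ^ s * (gfun α s r + 1)

/-- A bundled context: a group with two elements satisfying the Macdonald relations. -/
structure KCtx (G : Type*) [Group G] where
  a : G
  b : G
  c : G
  α : ℤ
  u₀ : ℤ
  N1 : ℕ
  N2 : ℕ
  hc : c = a⁻¹ * b⁻¹ * a * b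
  hsq : N2 = N1 * N1
  hodd : Odd N2
  hα : α = 1 + (N1 : ℤ) * u₀
  h1 : c⁻¹ * a * c = a ^ α
  h2 : c * b * c⁻¹ = b ^ α
  h3 : a ^ (N2 : ℤ) = 1
  h4 : b ^ (N2 : ℤ) = 1
  h5 : c ^ (N1 : ℤ) = 1

namespace KCtx

variable {G : Type*} [Group G] (K : KCtx G)

/-! #### exponent reduction -/

lemma da_red {x y : ℤ} (h : x ≡ y [ZMOD (K.N2 : ℤ)]) : K.a ^ x = K.a ^ y := by
  obtain ⟨k, hk⟩ := h.dvd
  have hy : y = x + (K.N2 : ℤ) * k := by linarith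
  rw [hy, zpow_add, zpow_mul, K.h3, one_zpow, mul_one]

lemma db_red {x y : ℤ} (h : x ≡ y [ZMOD (K.N2 : ℤ)]) : K.b ^ x = K.b ^ y := by
  obtain ⟨k, hk⟩ := h.dvd
  have hy : y = x + (K.N2 : ℤ) * k := by linarith
  rw [hy, zpow_add, zpow_mul, K.h4, one_zpow, mul_one]

/-! #### conjugation by `c` -/

lemma dstep_a (x : ℤ) : K.a ^ x * K.c = K.c * K.a ^ (K.α * x) := by
  have h : K.a ^ (K.α * x) = K.c⁻¹ * K.a ^ x * K.c := by
    rw [zpow_mul, ← K.h1,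
      show K.c⁻¹ * K.a * K.c = K.c⁻¹ * K.a * K.c⁻¹⁻¹ by rw [inv_inv], conj_zpow, inv_inv]
  rw [h]; group

lemma dstep_b (x : ℤ) : K.b ^ x * K.c⁻¹ = K.c⁻¹ * K.b ^ (K.α * x) := by
  have h : K.b ^ (K.α * x) = K.c * K.b ^ x * K.c⁻¹ := by
    rw [zpow_mul, ← K.h2, conj_zpow]
  rw [h]; group

lemma dconj_a (x : ℤ) : ∀ k : ℕ, K.a ^ x * K.c ^ (k : ℤ) = K.c ^ (k : ℤ) * K.a ^ (K.α ^ k * x)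
  | 0 => by simp
  | k + 1 => by
    have hsplit : K.c ^ ((k + 1 : ℕ) : ℤ) = K.c ^ (k : ℤ) * K.c := by
      push_cast; rw [zpow_add_one]
    rw [hsplit, ← mul_assoc, dconj_a x k, mul_assoc, dstep_a, ← mul_assoc, ← hsplit,
      show K.α * (K.α ^ k * x) = K.α ^ (k + 1) * x by ring]

lemma dconj_b (x : ℤ) : ∀ k : ℕ, K.b ^ x * K.c ^ (-(k : ℤ)) = K.c ^ (-(k : ℤ)) * K.b ^ (K.α ^ k * x)
  | 0 => by simp
  | k + 1 => by
    have hsplit : K.c ^ (-((k + 1 : ℕ) : ℤ)) = K.c⁻¹ * K.c ^ (-(k : ℤ)) := by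
      push_cast
      rw [show -((k : ℤ) + 1) = (-1) + (-(k : ℤ)) by ring, zpow_add, zpow_neg_one]
    rw [hsplit, ← mul_assoc, dstep_b, mul_assoc, dconj_b _ k, ← mul_assoc, ← hsplit,
      show K.α ^ k * (K.α * x) = K.α ^ (k + 1) * x by ring]

lemma d5 : K.b⁻¹ * K.a * K.b = K.a * K.c := by rw [K.hc]; group

lemma d6 : K.a⁻¹ * K.b * K.a = K.b * K.c⁻¹ := by rw [K.hc]; group

/-! #### powers of `a*c` and `b*c⁻¹` -/

lemma d7 : ∀ n : ℕ, (K.a * K.c) ^ n = K.c ^ (n : ℤ) * K.a ^ Sfun K.α n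
  | 0 => by simp [Sfun]
  | n + 1 => by
    rw [pow_succ, d7 n,
      show K.c ^ (n : ℤ) * K.a ^ Sfun K.α n * (K.a * K.c) =
        K.c ^ (n : ℤ) * ((K.a ^ Sfun K.α n * K.a) * K.c) by group,
      ← zpow_add_one, dstep_a, ← mul_assoc, ← zpow_add_one]
    have : ((n : ℤ) + 1) = ((n + 1 : ℕ) : ℤ) := by push_cast; ring
    rw [this, Sfun]

lemma d8 : ∀ n : ℕ, (K.b * K.c⁻¹) ^ n = K.c ^ (-(n : ℤ)) * K.b ^ Sfun K.α n
  | 0 => by simp [Sfun]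
  | n + 1 => by
    rw [pow_succ, d8 n,
      show K.c ^ (-(n : ℤ)) * K.b ^ Sfun K.α n * (K.b * K.c⁻¹) =
        K.c ^ (-(n : ℤ)) * ((K.b ^ Sfun K.α n * K.b) * K.c⁻¹) by group,
      ← zpow_add_one, dstep_b, ← mul_assoc]
    have : K.c ^ (-(n : ℤ)) * K.c⁻¹ = K.c ^ (-((n + 1 : ℕ) : ℤ)) := by
      push_cast
      rw [show -((n : ℤ) + 1) = (-(n : ℤ)) + (-1) by ring, zpow_add, zpow_neg_one]
    rw [this, Sfun]

/-! #### arithmetic of `Sfun` -/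

lemma hS2 : ∀ n : ℕ, 2 * Sfun K.α n ≡ 2 * n + K.N1 * K.u₀ * n * (n + 1) [ZMOD (K.N2 : ℤ)]
  | 0 => by simp [Sfun]
  | n + 1 => by
    have ih := hS2 n
    have step1 : 2 * Sfun K.α (n + 1) = K.α * (2 * Sfun K.α n) + K.α * 2 := by
      rw [Sfun]; ring
    rw [step1]
    calc K.α * (2 * Sfun K.α n) + K.α * 2
        ≡ K.α * (2 * n + K.N1 * K.u₀ * n * (n + 1)) + K.α * 2 [ZMOD (K.N2 : ℤ)] :=
          (ih.mul_left K.α).add_right _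
      _ ≡ 2 * (n + 1 : ℕ) + K.N1 * K.u₀ * (n + 1 : ℕ) * ((n + 1 : ℕ) + 1) [ZMOD (K.N2 : ℤ)] := by
          apply Int.ModEq.symm
          apply Int.modEq_iff_dvd.mpr
          refine ⟨K.u₀ * K.u₀ * (n * (n + 1)), ?_⟩
          rw [K.hα]
          push_cast
          rw [K.hsq]
          push_cast
          ring

lemma hSN1 : Sfun K.α K.N1 ≡ (K.N1 : ℤ) [ZMOD (K.N2 : ℤ)] := by
  have h := K.hS2 K.N1
  have h2 : 2 * K.N1 + K.N1 * K.u₀ * K.N1 * (K.N1 + 1) ≡ 2 * K.N1 [ZMOD (K.N2 : ℤ)] := by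
    apply Int.modEq_iff_dvd.mpr
    refine ⟨-(K.u₀ * (K.N1 + 1)), ?_⟩
    rw [K.hsq]; push_cast; ring
  have h3 : 2 * Sfun K.α K.N1 ≡ 2 * K.N1 [ZMOD (K.N2 : ℤ)] := h.trans h2
  have h4 : (K.N2 : ℤ) ∣ 2 * (Sfun K.α K.N1 - K.N1) := by
    obtain ⟨k, hk⟩ := h3.dvd
    exact ⟨-k, by linarith⟩
  have hcop : IsCoprime (K.N2 : ℤ) (2 : ℤ) := by
    rw [Int.isCoprime_iff_gcd_eq_one]
    have : Nat.Coprime 2 K.N2 := Nat.coprime_two_left.mpr K.hodd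
    simpa [Int.gcd, Nat.coprime_comm] using this.symm
  have h6 := hcop.dvd_of_dvd_mul_left h4
  obtain ⟨k, hk⟩ := h6
  exact Int.modEq_iff_dvd.mpr ⟨-k, by linarith⟩

/-! #### centrality of `a^{N1}` and `b^{N1}` -/

lemma hz1b : K.b⁻¹ * K.a ^ (K.N1 : ℤ) * K.b = K.a ^ (K.N1 : ℤ) := by
  have h : K.b⁻¹ * K.a ^ (K.N1 : ℤ) * K.b = (K.b⁻¹ * K.a * K.b) ^ (K.N1 : ℤ) := by
    rw [show K.b⁻¹ * K.a * K.b = K.b⁻¹ * K.a * K.b⁻¹⁻¹ by rw [inv_inv], conj_zpow, inv_inv]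
  rw [h, K.d5, zpow_natCast, K.d7, K.h5, one_mul]
  exact K.da_red K.hSN1

lemma hz2a : K.a⁻¹ * K.b ^ (K.N1 : ℤ) * K.a = K.b ^ (K.N1 : ℤ) := by
  have h : K.a⁻¹ * K.b ^ (K.N1 : ℤ) * K.a = (K.a⁻¹ * K.b * K.a) ^ (K.N1 : ℤ) := by
    rw [show K.a⁻¹ * K.b * K.a = K.a⁻¹ * K.b * K.a⁻¹⁻¹ by rw [inv_inv], conj_zpow, inv_inv]
  rw [h, K.d6, zpow_natCast, K.d8, zpow_neg, K.h5, inv_one, one_mul]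
  exact K.db_red K.hSN1

lemma cz1a : Commute (K.a ^ (K.N1 : ℤ)) K.a := (Commute.refl K.a).zpow_left _

lemma cz1b : Commute (K.a ^ (K.N1 : ℤ)) K.b := by
  have h := K.hz1b
  unfold Commute SemiconjBy
  calc K.a ^ (K.N1 : ℤ) * K.b = K.b * (K.b⁻¹ * K.a ^ (K.N1 : ℤ) * K.b) := by group
    _ = K.b * K.a ^ (K.N1 : ℤ) := by rw [h]

lemma cz2b : Commute (K.b ^ (K.N1 : ℤ)) K.b := (Commute.refl K.b).zpow_left _

lemma cz2a : Commute (K.b ^ (K.N1 : ℤ)) K.a := by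
  have h := K.hz2a
  unfold Commute SemiconjBy
  calc K.b ^ (K.N1 : ℤ) * K.a = K.a * (K.a⁻¹ * K.b ^ (K.N1 : ℤ) * K.a) := by group
    _ = K.a * K.b ^ (K.N1 : ℤ) := by rw [h]

lemma cz1c : Commute (K.a ^ (K.N1 : ℤ)) K.c := by
  rw [K.hc]
  exact ((((K.cz1a.inv_right).mul_right (K.cz1b.inv_right)).mul_right K.cz1a).mul_right K.cz1b)

lemma cz2c : Commute (K.b ^ (K.N1 : ℤ)) K.c := by
  rw [K.hc]
  exact ((((K.cz2a.inv_right).mul_right (K.cz2b.inv_right)).mul_right K.cz2a).mul_right K.cz2b)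

lemma d10 : K.b⁻¹ * K.c * K.b = (K.b ^ (K.N1 : ℤ)) ^ K.u₀ * K.c := by
  have hcb : K.c * K.b = K.b ^ K.α * K.c := by rw [← K.h2]; group
  calc K.b⁻¹ * K.c * K.b = K.b⁻¹ * (K.c * K.b) := by group
    _ = K.b⁻¹ * (K.b ^ K.α * K.c) := by rw [hcb]
    _ = K.b ^ (K.α - 1) * K.c := by group
    _ = (K.b ^ (K.N1 : ℤ)) ^ K.u₀ * K.c := by
        rw [← zpow_mul, K.hα]; norm_num

lemma d11 : ∀ j : ℕ, K.b ^ (-(j : ℤ)) * K.a * K.b ^ (j : ℤ) =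
    K.a * K.c ^ (j : ℤ) * (K.b ^ (K.N1 : ℤ)) ^ (K.u₀ * efun j)
  | 0 => by simp [efun]
  | j + 1 => by
    have hsplit : K.b ^ ((j + 1 : ℕ) : ℤ) = K.b ^ (j : ℤ) * K.b := by
      push_cast; rw [zpow_add_one]
    have hsplit' : K.b ^ (-((j + 1 : ℕ) : ℤ)) = K.b⁻¹ * K.b ^ (-(j : ℤ)) := by
      push_cast
      rw [show -((j : ℤ) + 1) = (-1) + (-(j : ℤ)) by ring, zpow_add, zpow_neg_one]
    rw [hsplit, hsplit',
      show K.b⁻¹ * K.b ^ (-(j : ℤ)) * K.a * (K.b ^ (j : ℤ) * K.b) =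
        K.b⁻¹ * (K.b ^ (-(j : ℤ)) * K.a * K.b ^ (j : ℤ)) * K.b by group,
      d11 j,
      show K.b⁻¹ * (K.a * K.c ^ (j : ℤ) * (K.b ^ (K.N1 : ℤ)) ^ (K.u₀ * efun j)) * K.b =
        (K.b⁻¹ * K.a * K.b) * (K.b⁻¹ * K.c ^ (j : ℤ) * K.b) *
          (K.b⁻¹ * (K.b ^ (K.N1 : ℤ)) ^ (K.u₀ * efun j) * K.b) by group,
      K.d5]
    have hz : K.b⁻¹ * (K.b ^ (K.N1 : ℤ)) ^ (K.u₀ * efun j) * K.b =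
        (K.b ^ (K.N1 : ℤ)) ^ (K.u₀ * efun j) := by group
    have hcj : K.b⁻¹ * K.c ^ (j : ℤ) * K.b =
        (K.b ^ (K.N1 : ℤ)) ^ (K.u₀ * (j : ℤ)) * K.c ^ (j : ℤ) := by
      have hconj : K.b⁻¹ * K.c ^ (j : ℤ) * K.b = (K.b⁻¹ * K.c * K.b) ^ (j : ℤ) := by
        rw [show K.b⁻¹ * K.c * K.b = K.b⁻¹ * K.c * K.b⁻¹⁻¹ by rw [inv_inv], conj_zpow, inv_inv]
      rw [hconj, K.d10, Commute.mul_zpow ((K.cz2c).zpow_left K.u₀) (j : ℤ), ← zpow_mul]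
    rw [hz, hcj]
    have hXC : (K.b ^ (K.N1 : ℤ)) ^ (K.u₀ * (j : ℤ)) * K.c ^ (j : ℤ) =
        K.c ^ (j : ℤ) * (K.b ^ (K.N1 : ℤ)) ^ (K.u₀ * (j : ℤ)) :=
      (((K.cz2c).zpow_left _).zpow_right _)
    rw [show K.a * K.c * ((K.b ^ (K.N1 : ℤ)) ^ (K.u₀ * (j : ℤ)) * K.c ^ (j : ℤ)) *
          (K.b ^ (K.N1 : ℤ)) ^ (K.u₀ * efun j) =
        K.a * K.c * ((K.b ^ (K.N1 : ℤ)) ^ (K.u₀ * (j : ℤ)) * K.c ^ (j : ℤ)) *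
          (K.b ^ (K.N1 : ℤ)) ^ (K.u₀ * efun j) from rfl, hXC,
      show K.a * K.c * (K.c ^ (j : ℤ) * (K.b ^ (K.N1 : ℤ)) ^ (K.u₀ * (j : ℤ))) *
          (K.b ^ (K.N1 : ℤ)) ^ (K.u₀ * efun j) =
        K.a * (K.c * K.c ^ (j : ℤ)) * ((K.b ^ (K.N1 : ℤ)) ^ (K.u₀ * (j : ℤ)) *
          (K.b ^ (K.N1 : ℤ)) ^ (K.u₀ * efun j)) by group,
      ← zpow_one_add, ← zpow_add]
    congr 1
    · congr 1
      push_cast; ring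
    · congr 1
      rw [efun]; push_cast; ring

/-! #### arithmetic mod `N1` -/

lemma hα_modN1 : K.α ≡ 1 [ZMOD (K.N1 : ℤ)] := by
  apply Int.modEq_iff_dvd.mpr
  exact ⟨-K.u₀, by rw [K.hα]; ring⟩

lemma hαk_modN1 (k : ℕ) : K.α ^ k ≡ 1 [ZMOD (K.N1 : ℤ)] := by
  simpa using K.hα_modN1.pow k

lemma hαN1_modN2 : K.α ^ K.N1 ≡ 1 [ZMOD (K.N2 : ℤ)] := by
  have h := one_add_pow_modEq ((K.N1 : ℤ) * K.u₀) K.N1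
  have hdvd : (K.N2 : ℤ) ∣ ((K.N1 : ℤ) * K.u₀) ^ 2 := ⟨K.u₀ * K.u₀, by rw [K.hsq]; push_cast; ring⟩
  have h2 := (h.of_dvd hdvd)
  have h3 : (1 + (K.N1 : ℤ) * ((K.N1 : ℤ) * K.u₀)) ≡ 1 [ZMOD (K.N2 : ℤ)] := by
    apply Int.modEq_iff_dvd.mpr
    exact ⟨-K.u₀, by rw [K.hsq]; push_cast; ring⟩
  calc K.α ^ K.N1 = (1 + (K.N1 : ℤ) * K.u₀) ^ K.N1 := by rw [K.hα]
    _ ≡ 1 + (K.N1 : ℤ) * ((K.N1 : ℤ) * K.u₀) [ZMOD (K.N2 : ℤ)] := h2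
    _ ≡ 1 [ZMOD (K.N2 : ℤ)] := h3

lemma hαsr (r s t : ℕ) (hrs : s * r = 1 + K.N2 * t) : K.α ^ (s * r) ≡ K.α [ZMOD (K.N2 : ℤ)] := by
  have h1 : K.α ^ (s * r) = K.α * ((K.α ^ K.N1) ^ (K.N1 * t)) := by
    rw [hrs, pow_add, pow_one, ← pow_mul, K.hsq]; ring_nf
  rw [h1]
  calc K.α * (K.α ^ K.N1) ^ (K.N1 * t) ≡ K.α * 1 ^ (K.N1 * t) [ZMOD (K.N2 : ℤ)] :=
        (K.hαN1_modN2.pow _).mul_left _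
    _ = K.α := by ring

lemma hg_mod (s : ℕ) : ∀ r : ℕ, gfun K.α s r ≡ (r : ℤ) [ZMOD (K.N1 : ℤ)]
  | 0 => by simp [gfun]
  | r + 1 => by
    rw [gfun]
    have h := (K.hαk_modN1 s).mul ((hg_mod s r).add_right 1)
    calc K.α ^ s * (gfun K.α s r + 1) ≡ 1 * ((r : ℤ) + 1) [ZMOD (K.N1 : ℤ)] := h
      _ = ((r + 1 : ℕ) : ℤ) := by push_cast; ring

/-! #### powers of `a * c^s` -/

lemma d12 (s : ℕ) : ∀ r : ℕ, (K.a * K.c ^ (s : ℤ)) ^ r = K.c ^ ((s * r : ℕ) : ℤ) * K.a ^ gfun K.α s r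
  | 0 => by simp [gfun]
  | r + 1 => by
    rw [pow_succ, d12 s r,
      show K.c ^ ((s * r : ℕ) : ℤ) * K.a ^ gfun K.α s r * (K.a * K.c ^ (s : ℤ)) =
        K.c ^ ((s * r : ℕ) : ℤ) * ((K.a ^ gfun K.α s r * K.a) * K.c ^ (s : ℤ)) by group,
      ← zpow_add_one, K.dconj_a _ s, ← mul_assoc, ← zpow_add]
    rw [gfun, show ((s * r : ℕ) : ℤ) + (s : ℤ) = ((s * (r + 1) : ℕ) : ℤ) by push_cast; ring]

lemma d13 (r s : ℕ) : K.b ^ (-(s : ℤ)) * K.a ^ (r : ℤ) * K.b ^ (s : ℤ) =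
    K.c ^ ((s * r : ℕ) : ℤ) * K.a ^ gfun K.α s r *
      (K.b ^ (K.N1 : ℤ)) ^ (K.u₀ * efun s * r) := by
  have hinv : K.b ^ (s : ℤ) = (K.b ^ (-(s : ℤ)))⁻¹ := by group
  rw [hinv, ← conj_zpow, ← hinv, K.d11 s]
  have hcomm : Commute ((K.b ^ (K.N1 : ℤ)) ^ (K.u₀ * efun s)) (K.a * K.c ^ (s : ℤ)) :=
    Commute.mul_right ((K.cz2a).zpow_left _) (((K.cz2c).zpow_left _).zpow_right _)
  rw [Commute.mul_zpow hcomm.symm, ← zpow_mul, zpow_natCast (K.a * K.c ^ (s : ℤ)) r, K.d12 s r,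
    mul_assoc]

/-! #### the commutator decomposition -/

lemma key_decomp (r s : ℕ) : ∃ W : G,
    (K.a ^ (r : ℤ))⁻¹ * (K.b ^ (s : ℤ))⁻¹ * K.a ^ (r : ℤ) * K.b ^ (s : ℤ) =
      K.c ^ ((s * r : ℕ) : ℤ) * W ∧
    (∀ x : ℤ, Commute W (K.a ^ x)) ∧ (∀ x : ℤ, Commute W (K.b ^ x)) ∧
    (∀ x : ℤ, Commute W (K.c ^ x)) ∧ W ^ ((K.N1 : ℕ) : ℤ) = 1 := by
  set D : ℤ := gfun K.α s r - K.α ^ (s * r) * r with hDdef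
  have hD : (K.N1 : ℤ) ∣ D := by
    have h := (K.hg_mod s r).sub ((K.hαk_modN1 (s * r)).mul_right (r : ℤ))
    have h2 : ((r : ℤ) - 1 * (r : ℤ)) = 0 := by ring
    rw [h2] at h
    exact (Int.modEq_zero_iff_dvd).mp h
  obtain ⟨d₀, hd₀⟩ := hD
  set E : ℤ := K.u₀ * efun s * r with hEdef
  refine ⟨K.a ^ D * (K.b ^ (K.N1 : ℤ)) ^ E, ?_, ?_, ?_, ?_, ?_⟩
  · rw [show (K.a ^ (r : ℤ))⁻¹ * (K.b ^ (s : ℤ))⁻¹ * K.a ^ (r : ℤ) * K.b ^ (s : ℤ) =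
        K.a ^ (-(r : ℤ)) * (K.b ^ (-(s : ℤ)) * K.a ^ (r : ℤ) * K.b ^ (s : ℤ)) by group,
      K.d13 r s,
      show K.a ^ (-(r : ℤ)) * (K.c ^ ((s * r : ℕ) : ℤ) * K.a ^ gfun K.α s r *
          (K.b ^ (K.N1 : ℤ)) ^ E) =
        (K.a ^ (-(r : ℤ)) * K.c ^ ((s * r : ℕ) : ℤ)) * (K.a ^ gfun K.α s r *
          (K.b ^ (K.N1 : ℤ)) ^ E) by group,
      K.dconj_a _ (s * r)]
    rw [show K.c ^ ((s * r : ℕ) : ℤ) * K.a ^ (K.α ^ (s * r) * -(r : ℤ)) *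
        (K.a ^ gfun K.α s r * (K.b ^ (K.N1 : ℤ)) ^ E) =
      K.c ^ ((s * r : ℕ) : ℤ) * ((K.a ^ (K.α ^ (s * r) * -(r : ℤ)) * K.a ^ gfun K.α s r) *
        (K.b ^ (K.N1 : ℤ)) ^ E) by group, ← zpow_add]
    congr 3
    rw [hDdef]; ring
  · intro x
    exact Commute.mul_left (Commute.zpow_zpow_self _ _ _) (((K.cz2a).zpow_left _).zpow_right _)
  · intro x
    apply Commute.mul_left
    · rw [hd₀, zpow_mul]
      exact ((K.cz1b).zpow_left _).zpow_right _
    · exact ((K.cz2b).zpow_left _).zpow_right _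
  · intro x
    apply Commute.mul_left
    · rw [hd₀, zpow_mul]
      exact ((K.cz1c).zpow_left _).zpow_right _
    · exact ((K.cz2c).zpow_left _).zpow_right _
  · have hcomm : Commute (K.a ^ D) ((K.b ^ (K.N1 : ℤ)) ^ E) :=
      (((K.cz2a).zpow_left E).zpow_right D).symm
    rw [Commute.mul_zpow hcomm]
    have e1 : (K.a ^ D) ^ ((K.N1 : ℕ) : ℤ) = 1 := by
      rw [← zpow_mul, hd₀, show (K.N1 : ℤ) * d₀ * (K.N1 : ℤ) = (K.N2 : ℤ) * d₀ by
        rw [K.hsq]; push_cast; ring, zpow_mul, K.h3, one_zpow]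
    have e2 : ((K.b ^ (K.N1 : ℤ)) ^ E) ^ ((K.N1 : ℕ) : ℤ) = 1 := by
      rw [← zpow_mul, ← zpow_mul, show (K.N1 : ℤ) * (E * (K.N1 : ℤ)) = (K.N2 : ℤ) * E by
        rw [K.hsq]; push_cast; ring, zpow_mul, K.h4, one_zpow]
    rw [e1, e2, one_mul]

/-! #### the five relator identities for `a^r`, `b^s` -/

lemma relator1 (r s t : ℕ) (hrs : s * r = 1 + K.N2 * t) :
    ((K.a ^ r)⁻¹ * (K.b ^ s)⁻¹ * K.a ^ r * K.b ^ s)⁻¹ * K.a ^ r *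
      ((K.a ^ r)⁻¹ * (K.b ^ s)⁻¹ * K.a ^ r * K.b ^ s) * ((K.a ^ r) ^ K.α)⁻¹ = 1 := by
  obtain ⟨W, hW, hWa, hWb, hWc, hWN⟩ := K.key_decomp r s
  have hna : K.a ^ r = K.a ^ ((r : ℕ) : ℤ) := (zpow_natCast _ _).symm
  have hnb : K.b ^ s = K.b ^ ((s : ℕ) : ℤ) := (zpow_natCast _ _).symm
  rw [mul_inv_eq_one, hna, hnb, hW]
  have step1 : (K.c ^ ((s * r : ℕ) : ℤ) * W)⁻¹ * K.a ^ ((r : ℕ) : ℤ) *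
      (K.c ^ ((s * r : ℕ) : ℤ) * W) =
      W⁻¹ * ((K.c ^ ((s * r : ℕ) : ℤ))⁻¹ * (K.a ^ ((r : ℕ) : ℤ) * K.c ^ ((s * r : ℕ) : ℤ))) * W := by
    group
  rw [step1, K.dconj_a _ (s * r),
    show (K.c ^ ((s * r : ℕ) : ℤ))⁻¹ * (K.c ^ ((s * r : ℕ) : ℤ) *
      K.a ^ (K.α ^ (s * r) * (r : ℤ))) = K.a ^ (K.α ^ (s * r) * (r : ℤ)) by group]
  have hcw : W⁻¹ * K.a ^ (K.α ^ (s * r) * (r : ℤ)) * W = K.a ^ (K.α ^ (s * r) * (r : ℤ)) := by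
    rw [(hWa _).inv_left.eq]; group
  rw [hcw, ← zpow_mul]
  apply K.da_red
  calc K.α ^ (s * r) * (r : ℤ) ≡ K.α * (r : ℤ) [ZMOD (K.N2 : ℤ)] :=
        (K.hαsr r s t hrs).mul_right _
    _ = (r : ℤ) * K.α := by ring

lemma relator2 (r s t : ℕ) (hrs : s * r = 1 + K.N2 * t) :
    ((K.a ^ r)⁻¹ * (K.b ^ s)⁻¹ * K.a ^ r * K.b ^ s) * K.b ^ s *
      ((K.a ^ r)⁻¹ * (K.b ^ s)⁻¹ * K.a ^ r * K.b ^ s)⁻¹ * ((K.b ^ s) ^ K.α)⁻¹ = 1 := by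
  obtain ⟨W, hW, hWa, hWb, hWc, hWN⟩ := K.key_decomp r s
  have hna : K.a ^ r = K.a ^ ((r : ℕ) : ℤ) := (zpow_natCast _ _).symm
  have hnb : K.b ^ s = K.b ^ ((s : ℕ) : ℤ) := (zpow_natCast _ _).symm
  rw [mul_inv_eq_one, hna, hnb, hW]
  have step1 : K.c ^ ((s * r : ℕ) : ℤ) * W * K.b ^ ((s : ℕ) : ℤ) *
      (K.c ^ ((s * r : ℕ) : ℤ) * W)⁻¹ =
      K.c ^ ((s * r : ℕ) : ℤ) * (W * K.b ^ ((s : ℕ) : ℤ) * W⁻¹) *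
        (K.c ^ ((s * r : ℕ) : ℤ))⁻¹ := by group
  have hcw : W * K.b ^ ((s : ℕ) : ℤ) * W⁻¹ = K.b ^ ((s : ℕ) : ℤ) := by
    rw [(hWb _).eq]; group
  rw [step1, hcw]
  have step2 : K.c ^ ((s * r : ℕ) : ℤ) * K.b ^ ((s : ℕ) : ℤ) * (K.c ^ ((s * r : ℕ) : ℤ))⁻¹ =
      K.c ^ ((s * r : ℕ) : ℤ) * (K.b ^ ((s : ℕ) : ℤ) * K.c ^ (-((s * r : ℕ) : ℤ))) := by
    group
  rw [step2, K.dconj_b _ (s * r),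
    show K.c ^ ((s * r : ℕ) : ℤ) * (K.c ^ (-((s * r : ℕ) : ℤ)) *
      K.b ^ (K.α ^ (s * r) * (s : ℤ))) = K.b ^ (K.α ^ (s * r) * (s : ℤ)) by group, ← zpow_mul]
  apply K.db_red
  calc K.α ^ (s * r) * (s : ℤ) ≡ K.α * (s : ℤ) [ZMOD (K.N2 : ℤ)] :=
        (K.hαsr r s t hrs).mul_right _
    _ = (s : ℤ) * K.α := by ring

lemma relator3 (r : ℕ) : (K.a ^ r) ^ K.N2 = 1 := by
  have h : K.a ^ (K.N2 : ℕ) = 1 := by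
    have := K.h3; rwa [zpow_natCast] at this
  rw [← pow_mul, mul_comm, pow_mul, h, one_pow]

lemma relator4 (r : ℕ) : (K.b ^ r) ^ K.N2 = 1 := by
  have h : K.b ^ (K.N2 : ℕ) = 1 := by
    have := K.h4; rwa [zpow_natCast] at this
  rw [← pow_mul, mul_comm, pow_mul, h, one_pow]

lemma relator5 (r s : ℕ) :
    ((K.a ^ r)⁻¹ * (K.b ^ s)⁻¹ * K.a ^ r * K.b ^ s) ^ K.N1 = 1 := by
  obtain ⟨W, hW, hWa, hWb, hWc, hWN⟩ := K.key_decomp r s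
  have hna : K.a ^ r = K.a ^ ((r : ℕ) : ℤ) := (zpow_natCast _ _).symm
  have hnb : K.b ^ s = K.b ^ ((s : ℕ) : ℤ) := (zpow_natCast _ _).symm
  rw [hna, hnb, hW, ← zpow_natCast (K.c ^ ((s * r : ℕ) : ℤ) * W) K.N1]
  have hcomm : Commute (K.c ^ ((s * r : ℕ) : ℤ)) W := (hWc _).symm
  rw [Commute.mul_zpow hcomm, hWN, mul_one, ← zpow_mul,
    show ((s * r : ℕ) : ℤ) * (K.N1 : ℤ) = (K.N1 : ℤ) * ((s * r : ℕ) : ℤ) by ring,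
    zpow_mul, K.h5, one_zpow]

end KCtx
end KGroupAux

open KGroupAux in
theorem KGroup_power_automorphisms (p m : ℕ) (hp : p.Prime) (hodd : Odd p) (hm : 1 ≤ m)
    (α : ℤ) (hα : vCond p m α) (hα' : specialCond p m α) :
    ∃ F : (ZMod (p ^ (2 * m)))ˣ →* MulAut (KGroup p m α),
      Function.Injective F ∧
      ∀ u : (ZMod (p ^ (2 * m)))ˣ,
        F u (PresentedGroup.of 0) = (PresentedGroup.of 0 : KGroup p m α) ^ (u : ZMod (p ^ (2 * m))).val ∧
        F u (PresentedGroup.of 1) = (PresentedGroup.of 1 : KGroup p m α) ^ ((u⁻¹ : (ZMod (p ^ (2 * m)))ˣ) : ZMod (p ^ (2 * m))).val := by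
  classical
  have hp1 : 1 < p := hp.one_lt
  haveI : NeZero (p ^ m) := ⟨pow_ne_zero _ hp.ne_zero⟩
  haveI : NeZero (p ^ (2 * m)) := ⟨pow_ne_zero _ hp.ne_zero⟩
  have hN2big : 1 < p ^ (2 * m) := by
    have : 1 ≤ 2 * m := by omega
    calc 1 < p := hp1
      _ = p ^ 1 := (pow_one p).symm
      _ ≤ p ^ (2 * m) := Nat.pow_le_pow_right (by omega) this
  haveI : Fact (1 < p ^ (2 * m)) := ⟨hN2big⟩
  obtain ⟨u₀, hu₀⟩ := hα.1
  have hαeq : α = 1 + ((p ^ m : ℕ) : ℤ) * u₀ := by push_cast; linarith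
  -- the half element
  have hoddpm : Odd (p ^ m) := hodd.pow
  set iv : ZMod (p ^ m) := (((p ^ m + 1) / 2 : ℕ) : ZMod (p ^ m)) with hiv
  have hivp : iv + iv = 1 := by
    obtain ⟨k, hk⟩ := hoddpm
    have h2 : ((p ^ m + 1) / 2 : ℕ) = k + 1 := by omega
    rw [hiv, h2, show ((k + 1 : ℕ) : ZMod (p ^ m)) + ((k + 1 : ℕ) : ZMod (p ^ m)) =
      ((2 * k + 2 : ℕ) : ZMod (p ^ m)) by push_cast; ring,
      show (2 * k + 2 : ℕ) = p ^ m + 1 by omega]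
    rw [Nat.cast_add, Nat.cast_one, ZMod.natCast_self, zero_add]
  haveI : Fact (iv + iv = 1) := ⟨hivp⟩
  set w : ZMod (p ^ m) := ((u₀ : ℤ) : ZMod (p ^ m)) with hw
  -- the model homomorphism
  have hφrels : ∀ x ∈ kRels p m α,
      FreeGroup.lift ![(QG.A : QG p m w iv), QG.B] x = 1 := by
    intro x hx
    simp only [kRels, Set.mem_insert_iff, Set.mem_singleton_iff] at hx
    rcases hx with h | h | h | h | h <;> subst h <;>
      simp only [map_mul, map_inv, map_zpow, map_pow, FreeGroup.lift_apply_of,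
        Matrix.cons_val_zero, Matrix.cons_val_one, Matrix.head_cons]
    · rw [QG.comm_AB]
      exact QG.rel1 α u₀ hw (by push_cast at hαeq ⊢; exact hαeq)
    · rw [QG.comm_AB]
      exact QG.rel2 α u₀ (by push_cast at hαeq ⊢; exact hαeq)
    · exact QG.rel3
    · exact QG.rel4
    · rw [QG.comm_AB]
      exact QG.rel5
  set φ : KGroup p m α →* QG p m w iv := PresentedGroup.toGroup hφrels with hφ
  -- the generators of K and the defining relations
  set a : KGroup p m α := PresentedGroup.of 0 with ha
  set b : KGroup p m α := PresentedGroup.of 1 with hb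
  have hmk : ∀ x ∈ kRels p m α, (PresentedGroup.mk (kRels p m α)) x = 1 := fun x hx =>
    (QuotientGroup.eq_one_iff _).mpr (Subgroup.subset_normalClosure hx)
  have hof0 : (PresentedGroup.mk (kRels p m α)) (FreeGroup.of 0) = a := rfl
  have hof1 : (PresentedGroup.mk (kRels p m α)) (FreeGroup.of 1) = b := rfl
  have R1 : ((a⁻¹ * b⁻¹ * a * b)⁻¹ * a * (a⁻¹ * b⁻¹ * a * b)) * (a ^ α)⁻¹ = 1 := by
    have h := hmk _ (show ((FreeGroup.of 0)⁻¹ * (FreeGroup.of 1)⁻¹ * FreeGroup.of 0 *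
        FreeGroup.of 1)⁻¹ * FreeGroup.of 0 * ((FreeGroup.of 0)⁻¹ * (FreeGroup.of 1)⁻¹ *
        FreeGroup.of 0 * FreeGroup.of 1) * ((FreeGroup.of 0 : FreeGroup (Fin 2)) ^ α)⁻¹ ∈
        kRels p m α by simp [kRels])
    simpa only [map_mul, map_inv, map_zpow, hof0, hof1] using h
  have R2 : ((a⁻¹ * b⁻¹ * a * b) * b * (a⁻¹ * b⁻¹ * a * b)⁻¹) * (b ^ α)⁻¹ = 1 := by
    have h := hmk _ (show ((FreeGroup.of 0)⁻¹ * (FreeGroup.of 1)⁻¹ * FreeGroup.of 0 *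
        FreeGroup.of 1) * FreeGroup.of 1 * ((FreeGroup.of 0)⁻¹ * (FreeGroup.of 1)⁻¹ *
        FreeGroup.of 0 * FreeGroup.of 1)⁻¹ * ((FreeGroup.of 1 : FreeGroup (Fin 2)) ^ α)⁻¹ ∈
        kRels p m α by simp [kRels])
    simpa only [map_mul, map_inv, map_zpow, hof0, hof1] using h
  have R3 : a ^ (p ^ (2 * m)) = 1 := by
    have h := hmk _ (show (FreeGroup.of 0 : FreeGroup (Fin 2)) ^ (p ^ (2 * m)) ∈
        kRels p m α by simp [kRels])
    simpa only [map_pow, hof0] using h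
  have R4 : b ^ (p ^ (2 * m)) = 1 := by
    have h := hmk _ (show (FreeGroup.of 1 : FreeGroup (Fin 2)) ^ (p ^ (2 * m)) ∈
        kRels p m α by simp [kRels])
    simpa only [map_pow, hof1] using h
  have R5 : (a⁻¹ * b⁻¹ * a * b) ^ (p ^ m) = 1 := by
    have h := hmk _ (show ((FreeGroup.of 0)⁻¹ * (FreeGroup.of 1)⁻¹ * FreeGroup.of 0 *
        (FreeGroup.of 1 : FreeGroup (Fin 2))) ^ (p ^ m) ∈ kRels p m α by simp [kRels])
    simpa only [map_mul, map_inv, map_pow, hof0, hof1] using h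
  -- bundle into a context
  set Kc : KCtx (KGroup p m α) :=
    { a := a, b := b, c := a⁻¹ * b⁻¹ * a * b, α := α, u₀ := u₀,
      N1 := p ^ m, N2 := p ^ (2 * m),
      hc := rfl,
      hsq := by rw [two_mul, pow_add],
      hodd := hodd.pow,
      hα := hαeq,
      h1 := mul_inv_eq_one.mp R1,
      h2 := mul_inv_eq_one.mp R2,
      h3 := by rw [zpow_natCast]; exact R3,
      h4 := by rw [zpow_natCast]; exact R4,
      h5 := by rw [zpow_natCast]; exact R5 } with hKc
  -- exponents
  set rv : (ZMod (p ^ (2 * m)))ˣ → ℕ := fun u => ((u : ZMod (p ^ (2 * m)))).val with hrv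
  have hcastrv : ∀ u : (ZMod (p ^ (2 * m)))ˣ,
      ((rv u : ℕ) : ZMod (p ^ (2 * m))) = (u : ZMod (p ^ (2 * m))) := fun u =>
    ZMod.natCast_rightInverse _
  have hrs : ∀ u : (ZMod (p ^ (2 * m)))ˣ, ∃ t : ℕ,
      rv u⁻¹ * rv u = 1 + p ^ (2 * m) * t := by
    intro u
    have hcast : ((rv u⁻¹ * rv u : ℕ) : ZMod (p ^ (2 * m))) = ((1 : ℕ) : ZMod (p ^ (2 * m))) := by
      push_cast [hcastrv]
      rw [← Units.val_mul, inv_mul_cancel, Units.val_one]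
    have hmod := (ZMod.natCast_eq_natCast_iff' _ _ _).mp hcast
    rw [Nat.one_mod_eq_one.mpr (by omega)] at hmod
    refine ⟨(rv u⁻¹ * rv u) / (p ^ (2 * m)), ?_⟩
    have := Nat.div_add_mod (rv u⁻¹ * rv u) (p ^ (2 * m))
    omega
  -- the endomorphisms
  have hrelsmap : ∀ u : (ZMod (p ^ (2 * m)))ˣ, ∀ x ∈ kRels p m α,
      FreeGroup.lift ![a ^ rv u, b ^ rv u⁻¹] x = 1 := by
    intro u x hx
    obtain ⟨t, ht⟩ := hrs u
    simp only [kRels, Set.mem_insert_iff, Set.mem_singleton_iff] at hx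
    rcases hx with h | h | h | h | h <;> subst h <;>
      simp only [map_mul, map_inv, map_zpow, map_pow, FreeGroup.lift_apply_of,
        Matrix.cons_val_zero, Matrix.cons_val_one, Matrix.head_cons]
    · exact Kc.relator1 (rv u) (rv u⁻¹) t ht
    · exact Kc.relator2 (rv u) (rv u⁻¹) t ht
    · exact Kc.relator3 (rv u)
    · exact Kc.relator4 (rv u⁻¹)
    · exact Kc.relator5 (rv u) (rv u⁻¹)
  set f : (ZMod (p ^ (2 * m)))ˣ → (KGroup p m α →* KGroup p m α) :=
    fun u => PresentedGroup.toGroup (hrelsmap u) with hf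
  have hf0 : ∀ u, f u a = a ^ rv u := by
    intro u
    show PresentedGroup.toGroup (hrelsmap u) (PresentedGroup.of 0) = _
    rw [PresentedGroup.toGroup.of]
    simp
  have hf1 : ∀ u, f u b = b ^ rv u⁻¹ := by
    intro u
    show PresentedGroup.toGroup (hrelsmap u) (PresentedGroup.of 1) = _
    rw [PresentedGroup.toGroup.of]
    simp
  -- reduction of exponents
  have hared : ∀ x y : ℕ, x % (p ^ (2 * m)) = y % (p ^ (2 * m)) → a ^ x = a ^ y := by
    intro x y h
    conv_lhs => rw [← Nat.div_add_mod x (p ^ (2 * m))]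
    conv_rhs => rw [← Nat.div_add_mod y (p ^ (2 * m))]
    rw [pow_add, pow_add, pow_mul a (p ^ (2 * m)), pow_mul a (p ^ (2 * m)), R3]
    simp [h]
  have hbred : ∀ x y : ℕ, x % (p ^ (2 * m)) = y % (p ^ (2 * m)) → b ^ x = b ^ y := by
    intro x y h
    conv_lhs => rw [← Nat.div_add_mod x (p ^ (2 * m))]
    conv_rhs => rw [← Nat.div_add_mod y (p ^ (2 * m))]
    rw [pow_add, pow_add, pow_mul b (p ^ (2 * m)), pow_mul b (p ^ (2 * m)), R4]
    simp [h]
  have hmulred : ∀ u v : (ZMod (p ^ (2 * m)))ˣ,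
      (rv u * rv v) % (p ^ (2 * m)) = rv (u * v) % (p ^ (2 * m)) := by
    intro u v
    apply (ZMod.natCast_eq_natCast_iff' _ _ _).mp
    push_cast [hcastrv]
    rfl
  have hff : ∀ u v : (ZMod (p ^ (2 * m)))ˣ, (f u).comp (f v) = f (u * v) := by
    intro u v
    apply PresentedGroup.ext
    intro x
    fin_cases x
    · show (f u) ((f v) a) = (f (u * v)) a
      rw [hf0, map_pow, hf0, ← pow_mul, hf0]
      exact hared _ _ (hmulred u v)
    · show (f u) ((f v) b) = (f (u * v)) b
      rw [hf1, map_pow, hf1, ← pow_mul, hf1]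
      apply hbred
      have huv : rv ((u * v)⁻¹) = rv (u⁻¹ * v⁻¹) :=
        congrArg rv (by rw [mul_inv_rev]; exact mul_comm _ _)
      rw [huv]
      exact hmulred u⁻¹ v⁻¹
  have hfone : f 1 = MonoidHom.id (KGroup p m α) := by
    apply PresentedGroup.ext
    intro x
    fin_cases x
    · show (f 1) a = a
      rw [hf0]
      have h1 : rv (1 : (ZMod (p ^ (2 * m)))ˣ) = 1 := by
        show ((1 : (ZMod (p ^ (2 * m)))ˣ) : ZMod (p ^ (2 * m))).val = 1
        rw [Units.val_one, ZMod.val_one]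
      rw [h1, pow_one]
    · show (f 1) b = b
      rw [hf1, inv_one]
      have h1 : rv (1 : (ZMod (p ^ (2 * m)))ˣ) = 1 := by
        show ((1 : (ZMod (p ^ (2 * m)))ˣ) : ZMod (p ^ (2 * m))).val = 1
        rw [Units.val_one, ZMod.val_one]
      rw [h1, pow_one]
  have hfcomp_id : ∀ u : (ZMod (p ^ (2 * m)))ˣ, (f u⁻¹).comp (f u) = MonoidHom.id _ := by
    intro u
    rw [hff, inv_mul_cancel, hfone]
  have hfcomp_id' : ∀ u : (ZMod (p ^ (2 * m)))ˣ, (f u).comp (f u⁻¹) = MonoidHom.id _ := by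
    intro u
    rw [hff, mul_inv_cancel, hfone]
  -- assemble the homomorphism into MulAut
  refine ⟨{ toFun := fun u => MonoidHom.toMulEquiv (f u) (f u⁻¹) (hfcomp_id u) (hfcomp_id' u),
            map_one' := ?_, map_mul' := ?_ }, ?_, ?_⟩
  · apply MulEquiv.ext
    intro x
    show (f 1) x = x
    rw [hfone]; rfl
  · intro u v
    apply MulEquiv.ext
    intro x
    show (f (u * v)) x = _
    rw [MulAut.mul_apply]
    show _ = (f u) ((f v) x)
    rw [← hff u v]; rfl
  · -- injectivity
    intro u v huv
    have h0 : (f u) a = (f v) a :=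
      congrArg (fun e : MulAut (KGroup p m α) => e a) huv
    rw [hf0, hf0] at h0
    have hφ0 := congrArg φ h0
    rw [map_pow, map_pow] at hφ0
    have hφa : φ a = QG.A := by
      show PresentedGroup.toGroup hφrels (PresentedGroup.of 0) = _
      rw [PresentedGroup.toGroup.of]
      simp
    rw [hφa, QG.A_pow, QG.A_pow] at hφ0
    have hx := congrArg QG.x hφ0
    simp only at hx
    rw [hcastrv u, hcastrv v] at hx
    exact Units.ext hx
  · intro u
    constructor
    · show (f u) a = a ^ rv u
      exact hf0 u
    · show (f u) b = b ^ rv u⁻¹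
      exact hf1 u
end
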